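/- arXiv:2010.02268 — 3 statements merged into one kernel-verified Lean document; each statement's English description precedes it below -/
import Mathlib

section
/- For the maximal class-c Lie algebra M_c over F_p (c ≥ 2), the number of ideals of codimension k is: 1 for k=0, 1+p for k=1, and 1 for each k with 2 ≤ k ≤ c+1. In particular, M_c(F_p) has exactly one ideal of codimension k for each 2 ≤ k ≤ c+1. -/
/-!
Write `x_i = b i` and `S k = b.tailSpan k` for the span of `x_k, …, x_c`. These are ideals for
`k ≥ 1`, and `[L, L] ⊆ S 2`.
If an ideal contains an element with nonzero `x_0`-coordinate, bracketing it with `x_1` gives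
`x_2`, and `ad x_0` then produces `x_3, …, x_c`; so the ideal contains `S 2` and has codimension
at most one. Every other ideal lies in `S 1`, on which `ad x_0` acts as the nilpotent shift
`x_i ↦ x_{i+1}`: a `d`-dimensional such ideal is killed by `(ad x_0)^d`, which forces it into
`S (c + 1 - d)`, hence equality. So below codimension one the ideals are exactly the `S k`, while
the codimension-one ideals are the hyperplanes containing `S 2`, i.e. the `p + 1` points of the
projective line `ℙ(L ⧸ S 2)`.
-/

open Module

namespace Module.Basis

variable {R M : Type*} [Semiring R] [AddCommMonoid M] [Module R M] {n : ℕ} (b : Basis (Fin n) R M)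

def tailSpan (k : ℕ) : Submodule R M := Submodule.span R (b '' {i | k ≤ (i : ℕ)})

variable {b}

theorem mem_tailSpan_iff {k : ℕ} {y : M} :
    y ∈ b.tailSpan k ↔ ∀ i : Fin n, (i : ℕ) < k → b.repr y i = 0 := by
  rw [tailSpan, mem_span_image]
  refine ⟨fun h i hi => ?_, fun h i hi => ?_⟩
  · by_contra hne
    exact absurd (h (Finsupp.mem_support_iff.2 hne)) (by simpa using hi)
  · by_contra hlt
    exact Finsupp.mem_support_iff.1 hi (h i (by simpa using hlt))

theorem apply_mem_tailSpan {k : ℕ} {i : Fin n} (h : k ≤ (i : ℕ)) : b i ∈ b.tailSpan k :=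
  Submodule.subset_span ⟨i, h, rfl⟩

theorem tailSpan_anti : Antitone b.tailSpan :=
  fun _ _ hkl => Submodule.span_mono (Set.image_mono fun _ hi => le_trans hkl hi)

theorem tailSpan_eq_bot {k : ℕ} (hk : n ≤ k) : b.tailSpan k = ⊥ := by
  simp [tailSpan, fun i : Fin n => i.is_lt.trans_le hk]

theorem finrank_tailSpan {R M : Type*} [Ring R] [StrongRankCondition R] [AddCommGroup M]
    [Module R M] {b : Basis (Fin n) R M} {k : ℕ} (hk : k ≤ n) :
    finrank R (b.tailSpan k) = n - k := by
  classical
  have := nontrivial_of_invariantBasisNumber R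
  have hcard := Finset.card_filter_add_card_filter_not (s := Finset.univ)
    fun i : Fin n => (i : ℕ) < k
  simp only [Fin.card_filter_val_lt, not_lt, Finset.card_univ, Fintype.card_fin] at hcard
  rw [tailSpan, finrank_span_set_eq_card (b.linearIndepOn _ |>.id_image), Set.toFinset_card,
    Fintype.card_eq_nat_card, Nat.card_coe_set_eq, Set.ncard_image_of_injective _ b.injective,
    Set.ncard_eq_toFinset_card', Set.toFinset_ofPred]
  omega

end Module.Basis

section Hyperplanes

variable {K V : Type*} [Field K] [AddCommGroup V] [Module K V] [FiniteDimensional K V]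

theorem Submodule.finrank_comap_mkQ (U : Submodule K V) (W : Submodule K (V ⧸ U)) :
    finrank K (W.comap U.mkQ) = finrank K W + finrank K U := by
  set f := U.mkQ.domRestrict (W.comap U.mkQ)
  have hrange : LinearMap.range f = W := by
    rw [LinearMap.range_domRestrict, Submodule.map_comap_eq_self (by simp)]
  have hker : LinearMap.ker f = U.comap (W.comap U.mkQ).subtype := by
    ext y
    simp [f]
  rw [← f.finrank_range_add_finrank_ker, hrange, hker,
    (Submodule.comapSubtypeEquivOfLe (Submodule.le_comap_mkQ U W)).finrank_eq]

theorem Submodule.natCard_setOf_le_finrank_eq_succ [Finite K] (U : Submodule K V)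
    (hU : finrank K U + 2 = finrank K V) :
    Nat.card {W : Submodule K V | U ≤ W ∧ finrank K W = finrank K U + 1} = Nat.card K + 1 := by
  have hquot : finrank K (V ⧸ U) = 2 := by
    have := U.finrank_quotient_add_finrank
    omega
  rw [← Projectivization.card_of_finrank_two K (V ⧸ U) hquot,
    Nat.card_congr (Projectivization.equivSubmodule K (V ⧸ U))]
  symm
  refine Nat.card_congr (Equiv.ofBijective
    (fun W => ⟨W.1.comap U.mkQ, U.le_comap_mkQ _, by rw [finrank_comap_mkQ, W.2, add_comm]⟩)
    ⟨fun W₁ W₂ h => ?_, fun W => ?_⟩)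
  · exact Subtype.ext (comap_injective_of_surjective U.mkQ_surjective (congrArg Subtype.val h))
  · have hW : (W.1.map U.mkQ).comap U.mkQ = W.1 := by rw [comap_map_mkQ, sup_eq_right.2 W.2.1]
    refine ⟨⟨W.1.map U.mkQ, ?_⟩, Subtype.ext hW⟩
    have := finrank_comap_mkQ U (W.1.map U.mkQ)
    rw [hW, W.2.2] at this
    omega

end Hyperplanes

theorem Module.Basis.lie_mem_of_lie_apply_mem {R L ι : Type*} [CommRing R] [LieRing L]
    [LieAlgebra R L] (b : Basis ι R L) {W : Submodule R L} {s : Set ι}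
    (h : ∀ i, ∀ j ∈ s, ⁅b i, b j⁆ ∈ W) (x : L) {y : L}
    (hy : y ∈ Submodule.span R (b '' s)) : ⁅x, y⁆ ∈ W := by
  induction hy using Submodule.span_induction with
  | mem _ hy =>
    obtain ⟨j, hj, rfl⟩ := hy
    rw [← b.linearCombination_repr x, Finsupp.linearCombination_apply, Finsupp.sum, sum_lie]
    exact Submodule.sum_mem _ fun i _ => by rw [smul_lie]; exact W.smul_mem _ (h i j hj)
  | zero => simp
  | add _ _ _ _ hy₁ hy₂ => rw [lie_add]; exact W.add_mem hy₁ hy₂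
  | smul a _ _ hy => rw [lie_smul]; exact W.smul_mem a hy

section MaximalClass

variable {K L : Type*} [Field K] [LieRing L] [LieAlgebra K L] {c : ℕ}

theorem LieIdeal.natCard_setOf_finrank_eq_finrank [FiniteDimensional K L] :
    Nat.card {I : LieIdeal K L | finrank K I = finrank K L} = 1 := by
  have h : {I : LieIdeal K L | finrank K I = finrank K L} = {⊤} := by
    ext I
    rw [Set.mem_ofPred_eq, Set.mem_singleton_iff, ← LieSubmodule.toSubmodule_eq_top]
    exact ⟨Submodule.eq_top_of_finrank_eq, fun h => by rw [← finrank_top K L, ← h]; rfl⟩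
  rw [h, Nat.card_unique]

structure IsMaximalClassBasis (b : Basis (Fin (c + 1)) K L) : Prop where
  lie_zero_eq_succ : ∀ (i : ℕ) (hi : 1 ≤ i) (hic : i ≤ c - 1),
    ⁅b 0, b ⟨i, by omega⟩⁆ = b ⟨i + 1, by omega⟩
  lie_zero_last : ⁅b 0, b (Fin.last c)⁆ = 0
  lie_of_pos : ∀ i j : Fin (c + 1), 1 ≤ (i : ℕ) → 1 ≤ (j : ℕ) → ⁅b i, b j⁆ = 0

namespace IsMaximalClassBasis

variable {b : Basis (Fin (c + 1)) K L} (hb : IsMaximalClassBasis b)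
include hb

theorem lie_zero (i : Fin (c + 1)) :
    ⁅b 0, b i⁆ = if h : 1 ≤ (i : ℕ) ∧ (i : ℕ) < c then b ⟨i + 1, by omega⟩ else 0 := by
  split_ifs with h
  · exact hb.lie_zero_eq_succ i h.1 (by omega)
  · obtain hi | hi : (i : ℕ) = 0 ∨ (i : ℕ) = c := by omega
    · rw [show i = 0 from Fin.ext hi, lie_self]
    · rw [show i = Fin.last c from Fin.ext hi, hb.lie_zero_last]

theorem lie_mem_tailSpan_succ {k : ℕ} (hk : 1 ≤ k) (x : L) {y : L} (hy : y ∈ b.tailSpan k) :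
    ⁅x, y⁆ ∈ b.tailSpan (k + 1) := by
  refine b.lie_mem_of_lie_apply_mem (fun i j (hj : k ≤ (j : ℕ)) => ?_) x hy
  rcases Nat.eq_zero_or_pos (i : ℕ) with hi | hi
  · rw [show i = 0 from Fin.ext hi, hb.lie_zero]
    split_ifs
    · exact Basis.apply_mem_tailSpan (by simp; omega)
    · exact zero_mem _
  · rw [hb.lie_of_pos i j hi (by omega)]
    exact zero_mem _

theorem lie_mem_tailSpan_two (x y : L) : ⁅x, y⁆ ∈ b.tailSpan 2 := by
  refine b.lie_mem_of_lie_apply_mem (s := Set.univ) (fun i j _ => ?_) x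
    (by rw [Set.image_univ, b.span_eq]; trivial)
  rcases Nat.eq_zero_or_pos (i : ℕ) with hi | hi
  · rw [show i = 0 from Fin.ext hi, hb.lie_zero]
    split_ifs
    · exact Basis.apply_mem_tailSpan (by simp; omega)
    · exact zero_mem _
  · rw [← lie_skew]
    exact neg_mem (hb.lie_mem_tailSpan_succ le_rfl _ (Basis.apply_mem_tailSpan hi))

theorem lie_one_eq_neg_smul (hc : 2 ≤ c) (y : L) :
    ⁅b ⟨1, by omega⟩, y⁆ = -(b.repr y 0) • b ⟨2, by omega⟩ := by
  suffices LieAlgebra.ad K L (b ⟨1, by omega⟩) = -(b.coord 0).smulRight (b ⟨2, by omega⟩) by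
    simpa using LinearMap.congr_fun this y
  refine b.ext fun i => ?_
  rcases Nat.eq_zero_or_pos (i : ℕ) with hi | hi
  · rw [show i = 0 from Fin.ext hi, LieAlgebra.ad_apply, ← lie_skew,
      hb.lie_zero_eq_succ 1 le_rfl (by omega)]
    simp
  · simp [hb.lie_of_pos ⟨1, by omega⟩ i le_rfl hi, Fin.ext_iff, hi.ne']

theorem tailSpan_two_le_of_repr_zero_ne_zero (I : LieIdeal K L) {y : L} (hy : y ∈ I)
    (hy₀ : b.repr y 0 ≠ 0) : b.tailSpan 2 ≤ I.toSubmodule := by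
  have hmem : ∀ j, 2 ≤ j → ∀ hj : j ≤ c, b ⟨j, by omega⟩ ∈ I := by
    intro j hj₂
    induction j, hj₂ using Nat.le_induction with
    | base =>
      intro hc
      have h := I.smul_mem (-(b.repr y 0)⁻¹) (I.lie_mem (x := b ⟨1, by omega⟩) hy)
      rwa [hb.lie_one_eq_neg_smul hc, smul_smul, neg_mul_neg, inv_mul_cancel₀ hy₀, one_smul] at h
    | succ j hj₂ ih =>
      intro hj
      rw [← hb.lie_zero_eq_succ j (by omega) (by omega)]
      exact I.lie_mem (ih (by omega))
  rw [Basis.tailSpan, Submodule.span_le]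
  rintro _ ⟨j, hj, rfl⟩
  exact hmem j hj (by omega)

theorem le_tailSpan_one_or_tailSpan_two_lt (I : LieIdeal K L) :
    I.toSubmodule ≤ b.tailSpan 1 ∨ b.tailSpan 2 < I.toSubmodule := by
  refine or_iff_not_imp_left.2 fun hI => ?_
  obtain ⟨y, hy, hy₁⟩ := SetLike.not_le_iff_exists.1 hI
  have hy₀ : b.repr y 0 ≠ 0 := fun h =>
    hy₁ <| Basis.mem_tailSpan_iff.2 fun i hi => by
      rwa [show i = 0 from Fin.ext (Nat.lt_one_iff.1 hi)]
  exact lt_of_le_of_ne (hb.tailSpan_two_le_of_repr_zero_ne_zero I hy hy₀)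
    fun h => hI (h ▸ Basis.tailSpan_anti (by norm_num))

theorem repr_lie_zero (y : L) {j : ℕ} (hj : 1 ≤ j) (hjc : j < c) :
    b.repr ⁅b 0, y⁆ ⟨j + 1, by omega⟩ = b.repr y ⟨j, by omega⟩ := by
  suffices (b.coord ⟨j + 1, by omega⟩).comp (LieAlgebra.ad K L (b 0)) =
      b.coord ⟨j, by omega⟩ from LinearMap.congr_fun this y
  refine b.ext fun i => ?_
  simp only [LinearMap.comp_apply, LieAlgebra.ad_apply, Basis.coord_apply, hb.lie_zero]
  split_ifs with h
  · simp [Finsupp.single_apply, Fin.ext_iff]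
  · simp [Finsupp.single_apply, Fin.ext_iff]
    omega

theorem repr_ad_pow (y : L) {j d : ℕ} (hj : 1 ≤ j) (hjd : j + d ≤ c) :
    b.repr ((LieAlgebra.ad K L (b 0) ^ d) y) ⟨j + d, by omega⟩ = b.repr y ⟨j, by omega⟩ := by
  induction d with
  | zero => rfl
  | succ d ih =>
    rw [pow_succ', Module.End.mul_apply, LieAlgebra.ad_apply]
    exact (hb.repr_lie_zero (j := j + d) _ (by omega) (by omega)).trans (ih (by omega))

theorem ad_pow_mem_tailSpan {k : ℕ} (hk : 1 ≤ k) (x : L) {y : L} (hy : y ∈ b.tailSpan k)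
    (m : ℕ) : (LieAlgebra.ad K L x ^ m) y ∈ b.tailSpan (k + m) := by
  induction m with
  | zero => simpa using hy
  | succ m ih =>
    rw [pow_succ', Module.End.mul_apply, LieAlgebra.ad_apply, ← add_assoc]
    exact hb.lie_mem_tailSpan_succ (by omega) x ih

theorem ad_pow_finrank_apply_eq_zero (I : LieIdeal K L) (hI : I.toSubmodule ≤ b.tailSpan 1)
    (x : L) {y : L} (hy : y ∈ I) : (LieAlgebra.ad K L x ^ finrank K I) y = 0 := by
  have : FiniteDimensional K L := Module.Finite.of_basis b
  let f := (LieAlgebra.ad K L x).restrict (p := I.toSubmodule) (q := I.toSubmodule)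
    fun z hz => I.lie_mem hz
  have hf_pow (n : ℕ) (z : I.toSubmodule) : ((f ^ n) z : L) = (LieAlgebra.ad K L x ^ n) z :=
    congrArg Subtype.val (LinearMap.congr_fun (Module.End.pow_restrict n _) z)
  have hf : f ^ c = 0 := LinearMap.ext fun z => Subtype.ext <| by
    have := hb.ad_pow_mem_tailSpan le_rfl x (hI z.2) c
    rwa [b.tailSpan_eq_bot (by omega), Submodule.mem_bot, ← hf_pow] at this
  have h := Module.End.ker_pow_le_ker_pow_finrank f c
    (by simp [hf] : ⟨y, hy⟩ ∈ LinearMap.ker (f ^ c))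
  rw [LinearMap.mem_ker] at h
  exact (hf_pow _ _).symm.trans (congrArg Subtype.val h)

theorem toSubmodule_eq_tailSpan_of_le (I : LieIdeal K L) (hI : I.toSubmodule ≤ b.tailSpan 1) :
    I.toSubmodule = b.tailSpan (c + 1 - finrank K I) := by
  have : FiniteDimensional K L := Module.Finite.of_basis b
  set d := finrank K I
  have hd : d ≤ c := (Submodule.finrank_mono hI).trans_eq (b.finrank_tailSpan (by omega))
  refine Submodule.eq_of_le_of_finrank_eq
    (fun y hy => Basis.mem_tailSpan_iff.2 fun i hi => ?_) ?_
  · rcases Nat.eq_zero_or_pos (i : ℕ) with hi₀ | hi₀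
    · exact Basis.mem_tailSpan_iff.1 (hI hy) i (by omega)
    · have := hb.repr_ad_pow y (j := i) (d := d) hi₀ (by omega)
      rwa [hb.ad_pow_finrank_apply_eq_zero I hI _ hy, map_zero, Finsupp.coe_zero, Pi.zero_apply,
        eq_comm] at this
  · rw [b.finrank_tailSpan (by omega)]
    change d = _
    omega

theorem exists_lieIdeal_toSubmodule_eq_tailSpan {k : ℕ} (hk : 1 ≤ k) :
    ∃ J : LieIdeal K L, J.toSubmodule = b.tailSpan k :=
  ⟨{ b.tailSpan k with
      lie_mem := fun {x _} hy => b.tailSpan_anti k.le_succ (hb.lie_mem_tailSpan_succ hk x hy) },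
    rfl⟩

theorem natCard_setOf_finrank_eq_of_lt {d : ℕ} (hd : d < c) :
    Nat.card {I : LieIdeal K L | finrank K I = d} = 1 := by
  have : FiniteDimensional K L := Module.Finite.of_basis b
  obtain ⟨J, hJ⟩ := hb.exists_lieIdeal_toSubmodule_eq_tailSpan (k := c + 1 - d) (by omega)
  suffices {I : LieIdeal K L | finrank K I = d} = {J} by rw [this, Nat.card_unique]
  ext I
  rw [Set.mem_ofPred_eq, Set.mem_singleton_iff]
  constructor
  · intro hI
    have hle : I.toSubmodule ≤ b.tailSpan 1 :=
      (hb.le_tailSpan_one_or_tailSpan_two_lt I).resolve_right fun hlt => by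
        have := Submodule.finrank_lt_finrank_of_lt hlt
        rw [b.finrank_tailSpan (by omega)] at this
        change _ < finrank K I at this
        omega
    apply LieSubmodule.toSubmodule_injective
    rw [hb.toSubmodule_eq_tailSpan_of_le I hle, hJ, hI]
  · intro hIJ
    rw [hIJ]
    change finrank K J.toSubmodule = d
    rw [hJ, b.finrank_tailSpan (by omega)]
    omega

theorem tailSpan_two_le_of_finrank_eq (I : LieIdeal K L) (hI : finrank K I = c) :
    b.tailSpan 2 ≤ I.toSubmodule := by
  have : FiniteDimensional K L := Module.Finite.of_basis b
  rcases hb.le_tailSpan_one_or_tailSpan_two_lt I with hle | hlt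
  · rw [Submodule.eq_of_le_of_finrank_eq hle
      (hI.trans (b.finrank_tailSpan (k := 1) (by omega)).symm)]
    exact Basis.tailSpan_anti (by norm_num)
  · exact hlt.le

theorem natCard_setOf_finrank_eq_c [Finite K] (hc : 1 ≤ c) :
    Nat.card {I : LieIdeal K L | finrank K I = c} = Nat.card K + 1 := by
  have : FiniteDimensional K L := Module.Finite.of_basis b
  have h₂ : finrank K (b.tailSpan 2) + 1 = c := by
    rw [b.finrank_tailSpan (by omega)]
    omega
  have hL : finrank K (b.tailSpan 2) + 2 = finrank K L := by
    rw [finrank_eq_card_basis b, Fintype.card_fin]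
    omega
  rw [← (b.tailSpan 2).natCard_setOf_le_finrank_eq_succ hL, h₂]
  refine Nat.card_congr (Equiv.ofBijective
    (fun I => ⟨I.1.toSubmodule, hb.tailSpan_two_le_of_finrank_eq I.1 I.2, I.2⟩) ⟨?_, fun W => ?_⟩)
  · exact fun I₁ I₂ h =>
      Subtype.ext (LieSubmodule.toSubmodule_injective (congrArg Subtype.val h))
  · exact ⟨⟨{ W.1 with lie_mem := fun {x y} _ => W.2.1 (hb.lie_mem_tailSpan_two x y) }, W.2.2⟩,
      rfl⟩

end IsMaximalClassBasis

end MaximalClass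

/-- For the maximal class-`c` Lie algebra `M_c` over `F_p` (`c ≥ 2`), with basis
`x_0,…,x_c` and brackets `[x_0,x_i] = x_{i+1}` for `1 ≤ i ≤ c-1` (all other basis
brackets zero), the number of ideals of codimension `k` is `1` for `k = 0`,
`1 + p` for `k = 1`, and `1` for each `2 ≤ k ≤ c + 1`. -/
theorem maximal_class_ideal_count (p c : ℕ) [Fact p.Prime] (hc : 2 ≤ c)
    (L : Type*) [LieRing L] [LieAlgebra (ZMod p) L]
    (b : Basis (Fin (c + 1)) (ZMod p) L)
    (hbr : ∀ (i : ℕ) (h1 : 1 ≤ i) (h2 : i ≤ c - 1),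
      ⁅b ⟨0, by omega⟩, b ⟨i, by omega⟩⁆ = b ⟨i + 1, by omega⟩)
    (h0c : ⁅b ⟨0, by omega⟩, b ⟨c, by omega⟩⁆ = 0)
    (hz : ∀ i j : Fin (c + 1), 1 ≤ (i : ℕ) → 1 ≤ (j : ℕ) → ⁅b i, b j⁆ = 0) :
    Nat.card {I : LieIdeal (ZMod p) L | finrank (ZMod p) I = c + 1} = 1 ∧
    Nat.card {I : LieIdeal (ZMod p) L | finrank (ZMod p) I = c} = 1 + p ∧
    (∀ k : ℕ, 2 ≤ k → k ≤ c + 1 →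
      Nat.card {I : LieIdeal (ZMod p) L | finrank (ZMod p) I = c + 1 - k} = 1) := by
  have hb : IsMaximalClassBasis b := ⟨hbr, h0c, hz⟩
  have : FiniteDimensional (ZMod p) L := Module.Finite.of_basis b
  have hL : finrank (ZMod p) L = c + 1 := by rw [finrank_eq_card_basis b, Fintype.card_fin]
  refine ⟨?_, ?_, fun k hk₂ hk => hb.natCard_setOf_finrank_eq_of_lt (by omega)⟩
  · rw [← hL]
    exact LieIdeal.natCard_setOf_finrank_eq_finrank
  · rw [hb.natCard_setOf_finrank_eq_c (by omega), Nat.card_zmod, add_comm]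
end

section
/- The Lie algebra sl_2(F_p) = ⟨e, f, h : [h,e]=2e, [h,f]=−2f, [e,f]=h⟩ has exactly 1+p subalgebras of codimension 1, exactly 1+p+p^2 subalgebras of codimension 2 (i.e., every 1-dimensional subspace is a subalgebra), the zero subalgebra, and the whole algebra; so its subalgebra zeta polynomial is 1 + (1+p)t + (1+p+p^2)t^2 + t^3. -/
/-!
Lie subalgebras are the submodules closed under the bracket. Every line is closed, so the
one-dimensional subalgebras are the points of the projective plane, `1 + p + p²` of them.
A plane is the kernel of a functional `φ`; bracketing two spanning vectors of `ker φ` shows that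
it is a subalgebra only if `4 φ(e) φ(f) + φ(h)² = 0`. Up to scaling, the solutions of this conic
are `φ = e*` and `φ = -t² e* + f* - 2t h*` for `t ∈ 𝔽_p` (in characteristic `2` because every
element is a square), cutting out the `1 + p` subalgebras `span {f, h}` and
`span {e + t² f, 2t f + h}`.
-/

open Module Submodule
open LinearMap (ker)

def lieClosedSubmodules (R L : Type*) [CommRing R] [LieRing L] [LieAlgebra R L] (k : ℕ) :
    Set (Submodule R L) :=
  {p | finrank R p = k ∧ ∀ x y, x ∈ p → y ∈ p → ⁅x, y⁆ ∈ p}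

section LieClosed

variable {R L : Type*} [CommRing R] [LieRing L] [LieAlgebra R L]

theorem LieSubalgebra.natCard_setOf_finrank_eq (k : ℕ) :
    Nat.card {S : LieSubalgebra R L | finrank R S = k} = Nat.card (lieClosedSubmodules R L k) := by
  rw [← Nat.card_image_of_injective LieSubalgebra.toSubmodule_injective]
  congr 2
  ext p
  rw [lieClosedSubmodules, Set.mem_ofPred_eq, ← p.exists_lieSubalgebra_coe_eq_iff]
  constructor
  · rintro ⟨S, hS, rfl⟩
    exact ⟨hS, S, rfl⟩
  · rintro ⟨hp, S, rfl⟩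
    exact ⟨S, hp, rfl⟩

theorem lie_mem_span_pair_of_lie_mem {u v : L} (h : ⁅u, v⁆ ∈ span R {u, v}) {x y : L}
    (hx : x ∈ span R {u, v}) (hy : y ∈ span R {u, v}) : ⁅x, y⁆ ∈ span R {u, v} := by
  obtain ⟨a, c, rfl⟩ := mem_span_pair.mp hx
  obtain ⟨a', c', rfl⟩ := mem_span_pair.mp hy
  have : ⁅a • u + c • v, a' • u + c' • v⁆ = (a * c' - c * a') • ⁅u, v⁆ := by
    simp only [add_lie, lie_add, smul_lie, lie_smul, lie_self, smul_zero]
    rw [← lie_skew v u]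
    module
  rw [this]
  exact smul_mem _ _ h

end LieClosed

section Field

variable {K L : Type*} [Field K] [LieRing L] [LieAlgebra K L]

theorem lieClosedSubmodules_zero [FiniteDimensional K L] : lieClosedSubmodules K L 0 = {⊥} := by
  ext p
  refine ⟨fun h => finrank_eq_zero.mp h.1, ?_⟩
  rintro rfl
  exact ⟨finrank_bot K L, fun _ _ hx _ => by simp_all⟩

theorem lieClosedSubmodules_finrank [FiniteDimensional K L] :
    lieClosedSubmodules K L (finrank K L) = {⊤} := by
  ext p
  refine ⟨fun h => eq_top_of_finrank_eq h.1, ?_⟩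
  rintro rfl
  exact ⟨finrank_top K L, fun _ _ _ _ => mem_top⟩

theorem lie_mem_of_finrank_eq_one {p : Submodule K L} (hp : finrank K p = 1) {x y : L}
    (hx : x ∈ p) (hy : y ∈ p) : ⁅x, y⁆ ∈ p := by
  rcases eq_or_ne x 0 with rfl | hx0
  · simp
  obtain ⟨c, hc⟩ :=
    (finrank_eq_one_iff_of_nonzero' (⟨x, hx⟩ : p) (by simpa using hx0)).mp hp ⟨y, hy⟩
  obtain rfl : c • x = y := congrArg Subtype.val hc
  simp

theorem lieClosedSubmodules_one :
    lieClosedSubmodules K L 1 = {p : Submodule K L | finrank K p = 1} := by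
  ext p
  exact ⟨fun h => h.1, fun h => ⟨h, fun _ _ hx hy => lie_mem_of_finrank_eq_one h hx hy⟩⟩

theorem natCard_lieClosedSubmodules_one [Finite K] :
    Nat.card (lieClosedSubmodules K L 1) =
      ∑ i ∈ Finset.range (finrank K L), Nat.card K ^ i := by
  rw [lieClosedSubmodules_one, ← Projectivization.card_of_finrank K L rfl,
    Nat.card_congr (Projectivization.equivSubmodule K L)]
  rfl

theorem Submodule.exists_dual_ker_eq [FiniteDimensional K L] {p : Submodule K L}
    (hp : finrank K p + 1 = finrank K L) : ∃ φ : Dual K L, ker φ = p := by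
  have hlt : p < ⊤ := lt_top_iff_ne_top.mpr fun h => by
    rw [h, finrank_top] at hp; omega
  obtain ⟨φ, hφ, hle⟩ := p.exists_le_ker_of_lt_top hlt
  refine ⟨φ, (Submodule.eq_of_le_of_finrank_le hle ?_).symm⟩
  have := Submodule.finrank_lt (s := ker φ) (by rwa [Ne, LinearMap.ker_eq_top])
  omega

theorem exists_two_mul_eq_and_sq_eq [Finite K] {B c : K} (h : B ^ 2 = 4 * c) :
    ∃ t : K, 2 * t = B ∧ t ^ 2 = c := by
  by_cases h2 : (2 : K) = 0
  · have hB : B = 0 := pow_eq_zero_iff two_ne_zero |>.mp <| by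
      rw [h, show (4 : K) = 2 * 2 by norm_num, h2, zero_mul, zero_mul]
    obtain ⟨t, rfl⟩ := FiniteField.isSquare_of_char_two
      (CharP.ringChar_of_prime_eq_zero Nat.prime_two (by exact_mod_cast h2)) c
    exact ⟨t, by rw [h2, zero_mul, hB], sq t⟩
  · refine ⟨B / 2, mul_div_cancel₀ B h2, ?_⟩
    field_simp
    linear_combination h

theorem finrank_span_pair_eq_two {V : Type*} [AddCommGroup V] [Module K V] {u v : V}
    (φ : Dual K V) (hu : u ≠ 0) (hφu : φ u = 0) (hφv : φ v ≠ 0) :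
    finrank K (span K {u, v}) = 2 := by
  have hli : LinearIndependent K ![u, v] :=
    (LinearIndependent.pair_iff' hu).mpr fun a h => hφv (by rw [← h, map_smul, hφu, smul_zero])
  rw [← Matrix.range_cons_cons_empty u v ![], finrank_span_eq_card hli, Fintype.card_fin]

end Field

section Sl2

variable {K L : Type*} [Field K] [LieRing L] [LieAlgebra K L] (b : Basis (Fin 3) K L)

noncomputable def sl2Plane : Option K → Submodule K L
  | none => span K {b 1, b 2}
  | some t => span K {b 0 + t ^ 2 • b 1, (2 * t) • b 1 + b 2}

noncomputable def sl2PlaneEquation : Option K → Dual K L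
  | none => b.coord 0
  | some t => -t ^ 2 • b.coord 0 + b.coord 1 - (2 * t) • b.coord 2

theorem sl2Plane_le_ker (w : Option K) :
    sl2Plane b w ≤ ker (sl2PlaneEquation b w) := by
  cases w <;> simp [sl2Plane, sl2PlaneEquation, span_le, Set.insert_subset_iff]

theorem finrank_sl2Plane (w : Option K) : finrank K (sl2Plane b w) = 2 := by
  cases w with
  | none => exact finrank_span_pair_eq_two (b.coord 2) (b.ne_zero 1) (by simp) (by simp)
  | some t =>
    refine finrank_span_pair_eq_two (b.coord 2) (fun h => ?_) (by simp) (by simp)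
    simpa using congrArg (b.coord 0) h

theorem sl2Plane_injective : Function.Injective (sl2Plane b) := by
  intro w w' h
  have hle := h ▸ sl2Plane_le_ker b w
  rcases w with _ | t <;> rcases w' with _ | s
  · rfl
  · simp [sl2Plane, sl2PlaneEquation, span_le, Set.insert_subset_iff] at hle
  · simp [sl2Plane, sl2PlaneEquation, span_le, Set.insert_subset_iff] at hle
  · obtain ⟨hsq, htwo⟩ : -t ^ 2 + s ^ 2 = 0 ∧ 2 * s - 2 * t = 0 := by
      simpa [sl2Plane, sl2PlaneEquation, span_le, Set.insert_subset_iff] using hle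
    rw [Option.some_inj, ← sub_eq_zero, ← pow_eq_zero_iff two_ne_zero]
    linear_combination hsq - t * htwo

variable {b} (hhe : ⁅b 2, b 0⁆ = (2 : K) • b 0) (hhf : ⁅b 2, b 1⁆ = -((2 : K) • b 1))
  (hef : ⁅b 0, b 1⁆ = b 2)

include hhe in
theorem lie_b0_b2 : ⁅b 0, b 2⁆ = -((2 : K) • b 0) := by rw [← lie_skew, hhe]

include hhf in
theorem lie_b1_b2 : ⁅b 1, b 2⁆ = (2 : K) • b 1 := by rw [← lie_skew, hhf, neg_neg]

include hef in
theorem lie_b1_b0 : ⁅b 1, b 0⁆ = -b 2 := by rw [← lie_skew, hef]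

include hhe hhf hef in
theorem lie_mem_sl2Plane (w : Option K) {x y : L} (hx : x ∈ sl2Plane b w)
    (hy : y ∈ sl2Plane b w) : ⁅x, y⁆ ∈ sl2Plane b w := by
  cases w with
  | none =>
    refine lie_mem_span_pair_of_lie_mem (mem_span_pair.mpr ⟨2, 0, ?_⟩) hx hy
    rw [lie_b1_b2 hhf]
    module
  | some t =>
    refine lie_mem_span_pair_of_lie_mem (mem_span_pair.mpr ⟨-2, 2 * t, ?_⟩) hx hy
    simp only [add_lie, lie_add, smul_lie, lie_smul, lie_self, hef, lie_b0_b2 hhe, lie_b1_b2 hhf]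
    module

include hhe hhf hef in
theorem exists_sl2Plane_le_ker [Finite K] (φ : Dual K L)
    (hφ : ∀ x y, x ∈ ker φ → y ∈ ker φ → ⁅x, y⁆ ∈ ker φ) :
    ∃ w, sl2Plane b w ≤ ker φ := by
  by_cases hφf : φ (b 1) = 0
  · have hφh : φ (b 2) = 0 := by
      have := hφ (b 1) (φ (b 2) • b 0 - φ (b 0) • b 2) hφf (by simp [mul_comm])
      simp only [lie_sub, lie_smul, lie_b1_b0 hef, lie_b1_b2 hhf, smul_neg, LinearMap.mem_ker,
        map_sub, map_neg, map_smul, smul_eq_mul] at this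
      exact mul_self_eq_zero.mp (by linear_combination -this - 2 * φ (b 0) * hφf)
    refine ⟨none, ?_⟩
    simpa [sl2Plane, span_le, Set.insert_subset_iff] using ⟨hφf, hφh⟩
  · have hconic : φ (b 2) ^ 2 = -4 * φ (b 0) * φ (b 1) := by
      have := hφ (φ (b 1) • b 0 - φ (b 0) • b 1) (φ (b 1) • b 2 - φ (b 2) • b 1)
        (by simp [mul_comm]) (by simp [mul_comm])
      simp only [lie_sub, sub_lie, lie_smul, smul_lie, lie_b0_b2 hhe, hef, lie_b1_b2 hhf, lie_self,
        smul_neg, smul_zero, sub_zero, LinearMap.mem_ker, map_sub, map_neg, map_smul,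
        smul_eq_mul] at this
      exact mul_left_cancel₀ hφf (by linear_combination -this)
    obtain ⟨t, ht, ht'⟩ := exists_two_mul_eq_and_sq_eq (B := -φ (b 2) / φ (b 1))
      (c := -φ (b 0) / φ (b 1)) (by field_simp; linear_combination hconic)
    have hu : φ (b 0) + t ^ 2 * φ (b 1) = 0 := by rw [ht']; field_simp; ring
    have hv : 2 * t * φ (b 1) + φ (b 2) = 0 := by rw [ht]; field_simp; ring
    exact ⟨some t, by simpa [sl2Plane, span_le, Set.insert_subset_iff] using ⟨hu, hv⟩⟩

include hhe hhf hef in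
theorem lieClosedSubmodules_two [Finite K] :
    lieClosedSubmodules K L 2 = Set.range (sl2Plane b) := by
  have : FiniteDimensional K L := b.finiteDimensional_of_finite
  ext p
  constructor
  · rintro ⟨hp, hlie⟩
    obtain ⟨φ, rfl⟩ := exists_dual_ker_eq (p := p) (by simp [hp, finrank_eq_card_basis b])
    obtain ⟨w, hw⟩ := exists_sl2Plane_le_ker hhe hhf hef φ hlie
    exact ⟨w, eq_of_le_of_finrank_eq hw (by rw [finrank_sl2Plane, hp])⟩
  · rintro ⟨w, rfl⟩
    exact ⟨finrank_sl2Plane b w, fun _ _ => lie_mem_sl2Plane hhe hhf hef w⟩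

end Sl2

/-- For `sl_2(F_p) = ⟨e, f, h : [h,e]=2e, [h,f]=-2f, [e,f]=h⟩`, the number of Lie
subalgebras of codimension `k` is `1, 1+p, 1+p+p^2, 1` for `k = 0,1,2,3`, i.e. its
subalgebra zeta polynomial is `1 + (1+p)t + (1+p+p^2)t^2 + t^3`. -/
theorem sl2_subalgebra_count (p : ℕ) [Fact p.Prime]
    (L : Type*) [LieRing L] [LieAlgebra (ZMod p) L]
    (b : Basis (Fin 3) (ZMod p) L)
    (hhe : ⁅b 2, b 0⁆ = (2 : ZMod p) • b 0)
    (hhf : ⁅b 2, b 1⁆ = -((2 : ZMod p) • b 1))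
    (hef : ⁅b 0, b 1⁆ = b 2) :
    Nat.card {S : LieSubalgebra (ZMod p) L | finrank (ZMod p) S = 3} = 1 ∧
    Nat.card {S : LieSubalgebra (ZMod p) L | finrank (ZMod p) S = 2} = 1 + p ∧
    Nat.card {S : LieSubalgebra (ZMod p) L | finrank (ZMod p) S = 1} = 1 + p + p ^ 2 ∧
    Nat.card {S : LieSubalgebra (ZMod p) L | finrank (ZMod p) S = 0} = 1 := by
  have : FiniteDimensional (ZMod p) L := b.finiteDimensional_of_finite
  have hL : finrank (ZMod p) L = 3 := by simp [finrank_eq_card_basis b]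
  simp only [LieSubalgebra.natCard_setOf_finrank_eq]
  refine ⟨?_, ?_, ?_, ?_⟩
  · rw [← hL, lieClosedSubmodules_finrank, Nat.card_unique]
  · rw [lieClosedSubmodules_two hhe hhf hef, Nat.card_range_of_injective (sl2Plane_injective b),
      Finite.card_option, Nat.card_zmod, add_comm]
  · rw [natCard_lieClosedSubmodules_one, hL, Nat.card_zmod]
    simp [Finset.sum_range_succ]
  · rw [lieClosedSubmodules_zero, Nat.card_unique]
end

section
/- For the 5-dimensional Lie algebra g_{5,3}(F_p) with presentation [x_1,x_2]=x_4, [x_1,x_4]=[x_2,x_3]=x_5, the ideal zeta polynomial is ζ_{F_p^3}(s) + p t^3 + t^4 + t^5; that is, the ideals of codimension k number binom(3,k)_p for k=0,1,2,3 (coming from subspaces containing the derived part), and in addition there are p ideals of codimension 3, 1 ideal of codimension 4, and 1 ideal of codimension 5. -/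
open Module Submodule Set
section G53
variable {p : ℕ} [Fact p.Prime] {L : Type*} [LieRing L] [LieAlgebra (ZMod p) L]
  (b : Basis (Fin 5) (ZMod p) L)

lemma ccB (i j : Fin 5) : b.coord i (b j) = if j = i then 1 else 0 := by
  simp [Basis.coord_apply, Basis.repr_self, Finsupp.single_apply]

lemma ccR (i j : Fin 5) : b.repr (b j) i = if j = i then 1 else 0 := by
  simp [Basis.repr_self, Finsupp.single_apply]

lemma sum_repr' (v : L) : ∑ i, b.coord i v • b i = v := by
  simpa [Basis.coord_apply] using b.sum_repr v

lemma ext_coords {u w : L} (h : ∀ i, b.coord i u = b.coord i w) : u = w := by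
  rw [← sum_repr' b u, ← sum_repr' b w]
  exact Finset.sum_congr rfl fun i _ => by rw [h]

def W1 : Submodule (ZMod p) L := span (ZMod p) (range ![b 4])

def W2 : Option (ZMod p) → Submodule (ZMod p) L
  | none => span (ZMod p) (range ![b 4, b 3])
  | some a => span (ZMod p) (range ![b 4, b 2 + a • b 3])

def W3 : (ZMod p × ZMod p) ⊕ (ZMod p) ⊕ Unit → Submodule (ZMod p) L
  | .inl (a, c) => span (ZMod p) (range ![b 0 + a • b 1 + c • b 2, b 3, b 4])
  | .inr (.inl c) => span (ZMod p) (range ![b 1 + c • b 2, b 3, b 4])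
  | .inr (.inr _) => span (ZMod p) (range ![b 2, b 3, b 4])

def W4 : (ZMod p × ZMod p) ⊕ (ZMod p) ⊕ Unit → Submodule (ZMod p) L
  | .inl (a, c) => span (ZMod p) (range ![b 0 + a • b 2, b 1 + c • b 2, b 3, b 4])
  | .inr (.inl a) => span (ZMod p) (range ![b 0 + a • b 1, b 2, b 3, b 4])
  | .inr (.inr _) => span (ZMod p) (range ![b 1, b 2, b 3, b 4])

lemma frW1 : finrank (ZMod p) (W1 b) = 1 := by
  rw [W1, finrank_span_eq_card (ι := Fin 1)
    (linearIndependent_unique_iff.mpr (by simpa using b.ne_zero 4))]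
  rfl

lemma frW2 (x : Option (ZMod p)) : finrank (ZMod p) (W2 b x) = 2 := by
  obtain _ | a := x <;>
  · rw [W2, finrank_span_eq_card (ι := Fin 2) ?_]
    · rfl
    rw [Fintype.linearIndependent_iff]
    intro g hg
    have h2 := congrArg (b.coord 2) hg
    have h3 := congrArg (b.coord 3) hg
    have h4 := congrArg (b.coord 4) hg
    simp [Fin.sum_univ_succ, ccB] at h2 h3 h4
    intro i; fin_cases i <;> simp_all

lemma frW3 (x : (ZMod p × ZMod p) ⊕ (ZMod p) ⊕ Unit) : finrank (ZMod p) (W3 b x) = 3 := by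
  obtain ⟨a, c⟩ | c | u := x <;>
  · rw [W3, finrank_span_eq_card (ι := Fin 3) ?_]
    · rfl
    rw [Fintype.linearIndependent_iff]
    intro g hg
    have h0 := congrArg (b.coord 0) hg
    have h1 := congrArg (b.coord 1) hg
    have h2 := congrArg (b.coord 2) hg
    have h3 := congrArg (b.coord 3) hg
    have h4 := congrArg (b.coord 4) hg
    simp [Fin.sum_univ_succ, ccB] at h0 h1 h2 h3 h4
    intro i; fin_cases i <;> simp_all

lemma frW4 (x : (ZMod p × ZMod p) ⊕ (ZMod p) ⊕ Unit) : finrank (ZMod p) (W4 b x) = 4 := by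
  obtain ⟨a, c⟩ | c | u := x <;>
  · rw [W4, finrank_span_eq_card (ι := Fin 4) ?_]
    · rfl
    rw [Fintype.linearIndependent_iff]
    intro g hg
    have h0 := congrArg (b.coord 0) hg
    have h1 := congrArg (b.coord 1) hg
    have h2 := congrArg (b.coord 2) hg
    have h3 := congrArg (b.coord 3) hg
    have h4 := congrArg (b.coord 4) hg
    simp [Fin.sum_univ_succ, ccB, show (Fin.succ 2 : Fin 4) = 3 from rfl] at h0 h1 h2 h3 h4
    intro i; fin_cases i <;> simp_all

variable (h01 : ⁅b 0, b 1⁆ = b 3) (h03 : ⁅b 0, b 3⁆ = b 4) (h12 : ⁅b 1, b 2⁆ = b 4)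
  (h02 : ⁅b 0, b 2⁆ = 0) (h04 : ⁅b 0, b 4⁆ = 0) (h13 : ⁅b 1, b 3⁆ = 0)
  (h14 : ⁅b 1, b 4⁆ = 0) (h23 : ⁅b 2, b 3⁆ = 0) (h24 : ⁅b 2, b 4⁆ = 0)
  (h34 : ⁅b 3, b 4⁆ = 0)

include h01 h03 h12 h02 h04 h13 h14 h23 h24 h34

lemma lie0 (v : L) : ⁅b 0, v⁆ = b.coord 1 v • b 3 + b.coord 3 v • b 4 := by
  conv_lhs => rw [← sum_repr' b v, Fin.sum_univ_five]
  simp [ h01, h02, h03, h04]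

lemma lie1 (v : L) : ⁅b 1, v⁆ = b.coord 2 v • b 4 - b.coord 0 v • b 3 := by
  have h10 : ⁅b 1, b 0⁆ = -b 3 := by rw [← lie_skew, h01]
  conv_lhs => rw [← sum_repr' b v, Fin.sum_univ_five]
  simp [ h10, h12, h13, h14]
  abel

lemma lie2 (v : L) : ⁅b 2, v⁆ = -(b.coord 1 v • b 4) := by
  have h20 : ⁅b 2, b 0⁆ = 0 := by rw [← lie_skew, h02, neg_zero]
  have h21 : ⁅b 2, b 1⁆ = -b 4 := by rw [← lie_skew, h12]
  conv_lhs => rw [← sum_repr' b v, Fin.sum_univ_five]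
  simp [ h20, h21, h23, h24]

lemma lie3 (v : L) : ⁅b 3, v⁆ = -(b.coord 0 v • b 4) := by
  have h30 : ⁅b 3, b 0⁆ = -b 4 := by rw [← lie_skew, h03]
  have h31 : ⁅b 3, b 1⁆ = 0 := by rw [← lie_skew, h13, neg_zero]
  have h32 : ⁅b 3, b 2⁆ = 0 := by rw [← lie_skew, h23, neg_zero]
  conv_lhs => rw [← sum_repr' b v, Fin.sum_univ_five]
  simp [ h30, h31, h32, h34]

lemma lie4 (v : L) : ⁅b 4, v⁆ = 0 := by
  have h40 : ⁅b 4, b 0⁆ = 0 := by rw [← lie_skew, h04, neg_zero]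
  have h41 : ⁅b 4, b 1⁆ = 0 := by rw [← lie_skew, h14, neg_zero]
  have h42 : ⁅b 4, b 2⁆ = 0 := by rw [← lie_skew, h24, neg_zero]
  have h43 : ⁅b 4, b 3⁆ = 0 := by rw [← lie_skew, h34, neg_zero]
  conv_lhs => rw [← sum_repr' b v, Fin.sum_univ_five]
  simp [ h40, h41, h42, h43]

omit h01 h03 h12 h02 h04 h13 h14 h23 h24 h34

lemma lie_mem_of_basis {W : Submodule (ZMod p) L}
    (h : ∀ i : Fin 5, ∀ m ∈ W, ⁅b i, m⁆ ∈ W) {x m : L} (hm : m ∈ W) : ⁅x, m⁆ ∈ W := by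
  let f : L →ₗ[ZMod p] L :=
    { toFun := fun y => ⁅y, m⁆, map_add' := fun a c => add_lie a c m,
      map_smul' := fun t a => smul_lie t a m }
  have : ⁅x, m⁆ = ∑ i, b.coord i x • ⁅b i, m⁆ := by
    calc ⁅x, m⁆ = f x := rfl
    _ = f (∑ i, b.coord i x • b i) := by rw [sum_repr']
    _ = ∑ i, b.coord i x • ⁅b i, m⁆ := by rw [map_sum]; simp [f]
  rw [this]
  exact Submodule.sum_mem _ fun i _ => W.smul_mem _ (h i m hm)

lemma lie_mem_span {n : ℕ} (v : Fin n → L)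
    (h : ∀ i : Fin 5, ∀ j, ⁅b i, v j⁆ ∈ span (ZMod p) (range v)) :
    ∀ i : Fin 5, ∀ m ∈ span (ZMod p) (range v), ⁅b i, m⁆ ∈ span (ZMod p) (range v) := by
  intro i m hm
  have : span (ZMod p) (range v) ≤
      (span (ZMod p) (range v)).comap (LieAlgebra.ad (ZMod p) L (b i)) := by
    rw [span_le]; rintro _ ⟨j, rfl⟩; exact h i j
  exact this hm

include h01 h03 h12 h02 h04 h13 h14 h23 h24 h34

/-- Brackets with any element land in any submodule containing `b 3` and `b 4`. -/
lemma lie_mem_of_34 {W : Submodule (ZMod p) L} (hb3 : b 3 ∈ W) (hb4 : b 4 ∈ W)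
    (i : Fin 5) (m : L) : ⁅b i, m⁆ ∈ W := by
  fin_cases i
  · have : ⁅b 0, m⁆ ∈ W := by
      rw [lie0 b h01 h03 h12 h02 h04 h13 h14 h23 h24 h34]; exact add_mem (W.smul_mem _ hb3) (W.smul_mem _ hb4)
    exact this
  · have : ⁅b 1, m⁆ ∈ W := by
      rw [lie1 b h01 h03 h12 h02 h04 h13 h14 h23 h24 h34]; exact sub_mem (W.smul_mem _ hb4) (W.smul_mem _ hb3)
    exact this
  · have : ⁅b 2, m⁆ ∈ W := by
      rw [lie2 b h01 h03 h12 h02 h04 h13 h14 h23 h24 h34]; exact neg_mem (W.smul_mem _ hb4)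
    exact this
  · have : ⁅b 3, m⁆ ∈ W := by
      rw [lie3 b h01 h03 h12 h02 h04 h13 h14 h23 h24 h34]; exact neg_mem (W.smul_mem _ hb4)
    exact this
  · have : ⁅b 4, m⁆ ∈ W := by
      rw [lie4 b h01 h03 h12 h02 h04 h13 h14 h23 h24 h34]; exact zero_mem _
    exact this

lemma lie_b4_right (i : Fin 5) : ⁅b i, b 4⁆ = 0 := by
  have c1 : b.coord 1 (b 4) = 0 := by simp [ccB]
  have c3 : b.coord 3 (b 4) = 0 := by simp [ccB]
  have c2 : b.coord 2 (b 4) = 0 := by simp [ccB]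
  have c0 : b.coord 0 (b 4) = 0 := by simp [ccB]
  fin_cases i
  · have : ⁅b 0, b 4⁆ = 0 := by rw [lie0 b h01 h03 h12 h02 h04 h13 h14 h23 h24 h34, c1, c3]; simp
    exact this
  · have : ⁅b 1, b 4⁆ = 0 := by rw [lie1 b h01 h03 h12 h02 h04 h13 h14 h23 h24 h34, c2, c0]; simp
    exact this
  · have : ⁅b 2, b 4⁆ = 0 := by rw [lie2 b h01 h03 h12 h02 h04 h13 h14 h23 h24 h34, c1]; simp
    exact this
  · have : ⁅b 3, b 4⁆ = 0 := by rw [lie3 b h01 h03 h12 h02 h04 h13 h14 h23 h24 h34, c0]; simp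
    exact this
  · have : ⁅b 4, b 4⁆ = 0 := by rw [lie4 b h01 h03 h12 h02 h04 h13 h14 h23 h24 h34]
    exact this

def J1 : LieIdeal (ZMod p) L :=
  ⟨W1 b, fun {x m} hm => by
    refine lie_mem_of_basis b (lie_mem_span b _ ?_) hm
    intro i j
    fin_cases j
    have : ⁅b i, b 4⁆ ∈ span (ZMod p) (range ![b 4]) := by
      rw [lie_b4_right b h01 h03 h12 h02 h04 h13 h14 h23 h24 h34]; exact zero_mem _
    exact this⟩

def J2 (x : Option (ZMod p)) : LieIdeal (ZMod p) L :=
  ⟨W2 b x, fun {xx m} hm => by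
    refine lie_mem_of_basis b ?_ hm
    obtain _ | a := x
    · refine lie_mem_span b ![b 4, b 3] ?_
      intro i j
      have hb4 : b 4 ∈ span (ZMod p) (range ![b 4, b 3]) := subset_span ⟨0, rfl⟩
      have hb3 : b 3 ∈ span (ZMod p) (range ![b 4, b 3]) := subset_span ⟨1, rfl⟩
      fin_cases j
      · have : ⁅b i, b 4⁆ ∈ span (ZMod p) (range ![b 4, b 3]) := by
          rw [lie_b4_right b h01 h03 h12 h02 h04 h13 h14 h23 h24 h34]; exact zero_mem _
        exact this
      · exact lie_mem_of_34 b h01 h03 h12 h02 h04 h13 h14 h23 h24 h34 hb3 hb4 i _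
    · refine lie_mem_span b ![b 4, b 2 + a • b 3] ?_
      intro i j
      have hb4 : b 4 ∈ span (ZMod p) (range ![b 4, b 2 + a • b 3]) := subset_span ⟨0, rfl⟩
      fin_cases j
      · have : ⁅b i, b 4⁆ ∈ span (ZMod p) (range ![b 4, b 2 + a • b 3]) := by
          rw [lie_b4_right b h01 h03 h12 h02 h04 h13 h14 h23 h24 h34]; exact zero_mem _
        exact this
      · have key : ∀ k : Fin 5, ⁅b k, b 2 + a • b 3⁆ ∈ span (ZMod p) (range ![b 4, b 2 + a • b 3]) := by
          intro k
          have e0 : b.coord 0 (b 2 + a • b 3) = 0 := by simp [ccB]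
          have e1 : b.coord 1 (b 2 + a • b 3) = 0 := by simp [ccB]
          have e2 : b.coord 2 (b 2 + a • b 3) = 1 := by simp [ccB]
          have e3 : b.coord 3 (b 2 + a • b 3) = a := by simp [ccB]
          fin_cases k
          · have : ⁅b 0, b 2 + a • b 3⁆ ∈ span (ZMod p) (range ![b 4, b 2 + a • b 3]) := by
              rw [lie0 b h01 h03 h12 h02 h04 h13 h14 h23 h24 h34, e1, e3, zero_smul, zero_add]
              exact Submodule.smul_mem _ _ hb4
            exact this
          · have : ⁅b 1, b 2 + a • b 3⁆ ∈ span (ZMod p) (range ![b 4, b 2 + a • b 3]) := by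
              rw [lie1 b h01 h03 h12 h02 h04 h13 h14 h23 h24 h34, e2, e0, zero_smul, sub_zero, one_smul]
              exact hb4
            exact this
          · have : ⁅b 2, b 2 + a • b 3⁆ ∈ span (ZMod p) (range ![b 4, b 2 + a • b 3]) := by
              rw [lie2 b h01 h03 h12 h02 h04 h13 h14 h23 h24 h34, e1, zero_smul, neg_zero]
              exact zero_mem _
            exact this
          · have : ⁅b 3, b 2 + a • b 3⁆ ∈ span (ZMod p) (range ![b 4, b 2 + a • b 3]) := by
              rw [lie3 b h01 h03 h12 h02 h04 h13 h14 h23 h24 h34, e0, zero_smul, neg_zero]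
              exact zero_mem _
            exact this
          · have : ⁅b 4, b 2 + a • b 3⁆ ∈ span (ZMod p) (range ![b 4, b 2 + a • b 3]) := by
              rw [lie4 b h01 h03 h12 h02 h04 h13 h14 h23 h24 h34]
              exact zero_mem _
            exact this
        exact key i⟩

def J3 (x : (ZMod p × ZMod p) ⊕ (ZMod p) ⊕ Unit) : LieIdeal (ZMod p) L :=
  ⟨W3 b x, fun {xx m} hm => by
    refine lie_mem_of_basis b ?_ hm
    obtain ⟨a, c⟩ | c | u := x
    · refine lie_mem_span b ![b 0 + a • b 1 + c • b 2, b 3, b 4] ?_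
      intro i j
      have hb3 : b 3 ∈ span (ZMod p) (range ![b 0 + a • b 1 + c • b 2, b 3, b 4]) := subset_span ⟨1, rfl⟩
      have hb4 : b 4 ∈ span (ZMod p) (range ![b 0 + a • b 1 + c • b 2, b 3, b 4]) := subset_span ⟨2, rfl⟩
      exact lie_mem_of_34 b h01 h03 h12 h02 h04 h13 h14 h23 h24 h34 hb3 hb4 i _
    · refine lie_mem_span b ![b 1 + c • b 2, b 3, b 4] ?_
      intro i j
      have hb3 : b 3 ∈ span (ZMod p) (range ![b 1 + c • b 2, b 3, b 4]) := subset_span ⟨1, rfl⟩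
      have hb4 : b 4 ∈ span (ZMod p) (range ![b 1 + c • b 2, b 3, b 4]) := subset_span ⟨2, rfl⟩
      exact lie_mem_of_34 b h01 h03 h12 h02 h04 h13 h14 h23 h24 h34 hb3 hb4 i _
    · refine lie_mem_span b ![b 2, b 3, b 4] ?_
      intro i j
      have hb3 : b 3 ∈ span (ZMod p) (range ![b 2, b 3, b 4]) := subset_span ⟨1, rfl⟩
      have hb4 : b 4 ∈ span (ZMod p) (range ![b 2, b 3, b 4]) := subset_span ⟨2, rfl⟩
      exact lie_mem_of_34 b h01 h03 h12 h02 h04 h13 h14 h23 h24 h34 hb3 hb4 i _⟩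

def J4 (x : (ZMod p × ZMod p) ⊕ (ZMod p) ⊕ Unit) : LieIdeal (ZMod p) L :=
  ⟨W4 b x, fun {xx m} hm => by
    refine lie_mem_of_basis b ?_ hm
    obtain ⟨a, c⟩ | c | u := x
    · refine lie_mem_span b ![b 0 + a • b 2, b 1 + c • b 2, b 3, b 4] ?_
      intro i j
      have hb3 : b 3 ∈ span (ZMod p) (range ![b 0 + a • b 2, b 1 + c • b 2, b 3, b 4]) := subset_span ⟨2, rfl⟩
      have hb4 : b 4 ∈ span (ZMod p) (range ![b 0 + a • b 2, b 1 + c • b 2, b 3, b 4]) := subset_span ⟨3, rfl⟩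
      exact lie_mem_of_34 b h01 h03 h12 h02 h04 h13 h14 h23 h24 h34 hb3 hb4 i _
    · refine lie_mem_span b ![b 0 + c • b 1, b 2, b 3, b 4] ?_
      intro i j
      have hb3 : b 3 ∈ span (ZMod p) (range ![b 0 + c • b 1, b 2, b 3, b 4]) := subset_span ⟨2, rfl⟩
      have hb4 : b 4 ∈ span (ZMod p) (range ![b 0 + c • b 1, b 2, b 3, b 4]) := subset_span ⟨3, rfl⟩
      exact lie_mem_of_34 b h01 h03 h12 h02 h04 h13 h14 h23 h24 h34 hb3 hb4 i _
    · refine lie_mem_span b ![b 1, b 2, b 3, b 4] ?_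
      intro i j
      have hb3 : b 3 ∈ span (ZMod p) (range ![b 1, b 2, b 3, b 4]) := subset_span ⟨2, rfl⟩
      have hb4 : b 4 ∈ span (ZMod p) (range ![b 1, b 2, b 3, b 4]) := subset_span ⟨3, rfl⟩
      exact lie_mem_of_34 b h01 h03 h12 h02 h04 h13 h14 h23 h24 h34 hb3 hb4 i _⟩


omit h01 h03 h12 h02 h04 h13 h14 h23 h24 h34
include b

lemma smul_cancel (I : LieIdeal (ZMod p) L) {c : ZMod p} (hc : c ≠ 0) {u : L}
    (h : c • u ∈ I) : u ∈ I := by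
  have h2 := SMulMemClass.smul_mem c⁻¹ h
  rwa [smul_smul, inv_mul_cancel₀ hc, one_smul] at h2

lemma le_finrank_of_li {n : ℕ} (I : LieIdeal (ZMod p) L) (v : Fin n → L)
    (hv : ∀ j, v j ∈ I) (li : LinearIndependent (ZMod p) v) :
    n ≤ finrank (ZMod p) I := by
  have := Module.Finite.of_basis b
  have hle : span (ZMod p) (range v) ≤ I.toSubmodule := by
    rw [span_le]; rintro _ ⟨j, rfl⟩; exact hv j
  calc (n : ℕ) = finrank (ZMod p) (span (ZMod p) (range v)) := by
        rw [finrank_span_eq_card li, Fintype.card_fin]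
  _ ≤ finrank (ZMod p) I := Submodule.finrank_mono hle

lemma eq_of_span_le {k : ℕ} (I : LieIdeal (ZMod p) L) (W : Submodule (ZMod p) L)
    (hle : W ≤ I.toSubmodule) (h1 : finrank (ZMod p) W = k)
    (h2 : finrank (ZMod p) I = k) : I.toSubmodule = W := by
  have := Module.Finite.of_basis b
  exact (Submodule.eq_of_le_of_finrank_le hle (by rw [h1]; exact h2.le)).symm

include h01 h03 h12 h02 h04 h13 h14 h23 h24 h34

lemma mem34 (I : LieIdeal (ZMod p) L) {v : L} (hv : v ∈ I)
    (h : b.coord 0 v ≠ 0 ∨ b.coord 1 v ≠ 0) : b 3 ∈ I ∧ b 4 ∈ I := by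
  have w1 : b.coord 1 v • b 3 + b.coord 3 v • b 4 ∈ I := by
    rw [← lie0 b h01 h03 h12 h02 h04 h13 h14 h23 h24 h34 v]; exact I.lie_mem hv
  have w2 : b.coord 2 v • b 4 - b.coord 0 v • b 3 ∈ I := by
    rw [← lie1 b h01 h03 h12 h02 h04 h13 h14 h23 h24 h34 v]; exact I.lie_mem hv
  have k1 : b.coord 1 v • b 4 ∈ I := by
    have h' : -(b.coord 1 v • b 4) ∈ I := by rw [← lie2 b h01 h03 h12 h02 h04 h13 h14 h23 h24 h34 v]; exact I.lie_mem hv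
    simpa using neg_mem h'
  have k0 : b.coord 0 v • b 4 ∈ I := by
    have h' : -(b.coord 0 v • b 4) ∈ I := by rw [← lie3 b h01 h03 h12 h02 h04 h13 h14 h23 h24 h34 v]; exact I.lie_mem hv
    simpa using neg_mem h'
  rcases h with h | h
  · have hb4 : b 4 ∈ I := smul_cancel b I h k0
    have hb3 : b 3 ∈ I := by
      refine smul_cancel b I h ?_
      have h'' := sub_mem (SMulMemClass.smul_mem (b.coord 2 v) hb4) w2
      simpa using h''
    exact ⟨hb3, hb4⟩
  · have hb4 : b 4 ∈ I := smul_cancel b I h k1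
    have hb3 : b 3 ∈ I := by
      refine smul_cancel b I h ?_
      have h'' := sub_mem w1 (SMulMemClass.smul_mem (b.coord 3 v) hb4)
      simpa using h''
    exact ⟨hb3, hb4⟩

lemma low_coords (I : LieIdeal (ZMod p) L) (hI : finrank (ZMod p) I ≤ 2) :
    ∀ v ∈ I, b.coord 0 v = 0 ∧ b.coord 1 v = 0 := by
  intro v hv
  by_contra hcon
  rw [not_and_or] at hcon
  obtain ⟨hb3, hb4⟩ := mem34 b h01 h03 h12 h02 h04 h13 h14 h23 h24 h34 I hv hcon
  have li : LinearIndependent (ZMod p) ![b 3, b 4, v] := by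
    rw [Fintype.linearIndependent_iff]
    intro g hg
    have e0 := congrArg (b.coord 0) hg
    have e1 := congrArg (b.coord 1) hg
    have e3 := congrArg (b.coord 3) hg
    have e4 := congrArg (b.coord 4) hg
    simp [Fin.sum_univ_succ, ccB] at e0 e1 e3 e4
    have hg2 : g 2 = 0 := by
      rcases hcon with h | h
      · rcases e0 with h' | h'
        · exact h'
        · exact absurd (by rw [Basis.coord_apply]; exact h') h
      · rcases e1 with h' | h'
        · exact h'
        · exact absurd (by rw [Basis.coord_apply]; exact h') h
    intro i; fin_cases i <;> simp_all
  have h3 := le_finrank_of_li b I ![b 3, b 4, v] (fun j => by fin_cases j <;> assumption) li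
  omega

lemma classify1 (I : LieIdeal (ZMod p) L) (hI : finrank (ZMod p) I = 1) :
    I.toSubmodule = W1 b := by
  have fd := Module.Finite.of_basis b
  have low := low_coords b h01 h03 h12 h02 h04 h13 h14 h23 h24 h34 I (by omega)
  have low2 : ∀ v ∈ I, b.coord 2 v = 0 ∧ b.coord 3 v = 0 := by
    intro v hv
    obtain ⟨l0, l1⟩ := low v hv
    have w1 : b.coord 3 v • b 4 ∈ I := by
      have h' : b.coord 1 v • b 3 + b.coord 3 v • b 4 ∈ I := by
        rw [← lie0 b h01 h03 h12 h02 h04 h13 h14 h23 h24 h34 v]; exact I.lie_mem hv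
      rwa [l1, zero_smul, zero_add] at h'
    have w2 : b.coord 2 v • b 4 ∈ I := by
      have h' : b.coord 2 v • b 4 - b.coord 0 v • b 3 ∈ I := by
        rw [← lie1 b h01 h03 h12 h02 h04 h13 h14 h23 h24 h34 v]; exact I.lie_mem hv
      rwa [l0, zero_smul, sub_zero] at h'
    constructor
    · by_contra hc
      have hb4 : b 4 ∈ I := smul_cancel b I hc w2
      have li : LinearIndependent (ZMod p) ![b 4, v] := by
        rw [Fintype.linearIndependent_iff]
        intro g hg
        have e2 := congrArg (b.coord 2) hg
        have e4 := congrArg (b.coord 4) hg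
        simp [Fin.sum_univ_succ, ccB] at e2 e4
        have hg1 : g 1 = 0 := by
          rcases e2 with h' | h'
          · exact h'
          · exact absurd (by rw [Basis.coord_apply]; exact h') hc
        intro i; fin_cases i <;> simp_all
      have h2 := le_finrank_of_li b I ![b 4, v] (fun j => by fin_cases j <;> assumption) li
      omega
    · by_contra hc
      have hb4 : b 4 ∈ I := smul_cancel b I hc w1
      have li : LinearIndependent (ZMod p) ![b 4, v] := by
        rw [Fintype.linearIndependent_iff]
        intro g hg
        have e3 := congrArg (b.coord 3) hg
        have e4 := congrArg (b.coord 4) hg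
        simp [Fin.sum_univ_succ, ccB] at e3 e4
        have hg1 : g 1 = 0 := by
          rcases e3 with h' | h'
          · exact h'
          · exact absurd (by rw [Basis.coord_apply]; exact h') hc
        intro i; fin_cases i <;> simp_all
      have h2 := le_finrank_of_li b I ![b 4, v] (fun j => by fin_cases j <;> assumption) li
      omega
  have hle : I.toSubmodule ≤ W1 b := by
    intro v hv
    have hv' : v ∈ I := hv
    rw [← sum_repr' b v, Fin.sum_univ_five, (low v hv').1, (low v hv').2,
      (low2 v hv').1, (low2 v hv').2]
    simp only [zero_smul, zero_add, add_zero]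
    exact Submodule.smul_mem _ _ (subset_span ⟨0, rfl⟩)
  have := Module.Finite.of_basis b
  exact Submodule.eq_of_le_of_finrank_le hle (by rw [frW1]; exact hI.ge)


lemma classify2 (I : LieIdeal (ZMod p) L) (hI : finrank (ZMod p) I = 2) :
    ∃ x, I.toSubmodule = W2 b x := by
  have fd := Module.Finite.of_basis b
  have low := low_coords b h01 h03 h12 h02 h04 h13 h14 h23 h24 h34 I (by omega)
  by_cases hex : ∃ v ∈ I, b.coord 2 v ≠ 0 ∨ b.coord 3 v ≠ 0
  · obtain ⟨v, hv, hcase⟩ := hex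
    obtain ⟨l0, l1⟩ := low v hv
    have w1 : b.coord 3 v • b 4 ∈ I := by
      have h' : b.coord 1 v • b 3 + b.coord 3 v • b 4 ∈ I := by
        rw [← lie0 b h01 h03 h12 h02 h04 h13 h14 h23 h24 h34 v]; exact I.lie_mem hv
      rwa [l1, zero_smul, zero_add] at h'
    have w2 : b.coord 2 v • b 4 ∈ I := by
      have h' : b.coord 2 v • b 4 - b.coord 0 v • b 3 ∈ I := by
        rw [← lie1 b h01 h03 h12 h02 h04 h13 h14 h23 h24 h34 v]; exact I.lie_mem hv
      rwa [l0, zero_smul, sub_zero] at h'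
    have hb4 : b 4 ∈ I := by
      rcases hcase with h | h
      · exact smul_cancel b I h w2
      · exact smul_cancel b I h w1
    by_cases hc2 : b.coord 2 v = 0
    · have hc3 : b.coord 3 v ≠ 0 := hcase.resolve_left (not_not_intro hc2)
      refine ⟨none, ?_⟩
      have l0' : b.repr v 0 = 0 := l0
      have l1' : b.repr v 1 = 0 := l1
      have hc2' : b.repr v 2 = 0 := hc2
      have hc3' : b.repr v 3 ≠ 0 := hc3
      have key : b 3 = (b.coord 3 v)⁻¹ • (v - b.coord 4 v • b 4) := by
        apply ext_coords b
        intro i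
        fin_cases i <;>
          simp [ccR, l0', l1', hc2', Basis.coord_apply, inv_mul_cancel₀ hc3']
      have gen_mem : b 3 ∈ I := by
        rw [key]
        exact SMulMemClass.smul_mem _ (sub_mem hv (SMulMemClass.smul_mem _ hb4))
      have hle : W2 b none ≤ I.toSubmodule := by
        rw [show W2 b none = span (ZMod p) (range ![b 4, b 3]) from rfl, span_le]
        rintro _ ⟨j, rfl⟩
        fin_cases j
        · exact hb4
        · exact gen_mem
      exact eq_of_span_le b I _ hle (frW2 b none) hI
    · refine ⟨some ((b.coord 2 v)⁻¹ * b.coord 3 v), ?_⟩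
      have l0' : b.repr v 0 = 0 := l0
      have l1' : b.repr v 1 = 0 := l1
      have hc2'' : b.repr v 2 ≠ 0 := hc2
      have key : b 2 + ((b.coord 2 v)⁻¹ * b.coord 3 v) • b 3
          = (b.coord 2 v)⁻¹ • (v - b.coord 4 v • b 4) := by
        apply ext_coords b
        intro i
        fin_cases i <;>
          simp [ccR, l0', l1', Basis.coord_apply, inv_mul_cancel₀ hc2'']
      have gen_mem : b 2 + ((b.coord 2 v)⁻¹ * b.coord 3 v) • b 3 ∈ I := by
        rw [key]
        exact SMulMemClass.smul_mem _ (sub_mem hv (SMulMemClass.smul_mem _ hb4))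
      have hle : W2 b (some ((b.coord 2 v)⁻¹ * b.coord 3 v)) ≤ I.toSubmodule := by
        rw [show W2 b (some ((b.coord 2 v)⁻¹ * b.coord 3 v)) =
          span (ZMod p) (range ![b 4, b 2 + ((b.coord 2 v)⁻¹ * b.coord 3 v) • b 3]) from rfl,
          span_le]
        rintro _ ⟨j, rfl⟩
        fin_cases j
        · exact hb4
        · exact gen_mem
      exact eq_of_span_le b I _ hle (frW2 b _) hI
  · exfalso
    push_neg at hex
    have hle : I.toSubmodule ≤ W1 b := by
      intro v hv
      have hv' : v ∈ I := hv
      rw [← sum_repr' b v, Fin.sum_univ_five, (low v hv').1, (low v hv').2,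
        (hex v hv').1, (hex v hv').2]
      simp only [zero_smul, zero_add, add_zero]
      exact Submodule.smul_mem _ _ (subset_span ⟨0, rfl⟩)
    have hfr : finrank (ZMod p) I.toSubmodule ≤ 1 := by
      have := Submodule.finrank_mono (s := I.toSubmodule) (t := W1 b) hle
      rwa [frW1] at this
    have hI' : finrank (ZMod p) I.toSubmodule = 2 := hI
    omega

lemma classify3 (I : LieIdeal (ZMod p) L) (hI : finrank (ZMod p) I = 3) :
    ∃ x, I.toSubmodule = W3 b x := by
  have fd := Module.Finite.of_basis b
  by_cases hex : ∃ v ∈ I, b.coord 0 v ≠ 0 ∨ b.coord 1 v ≠ 0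
  · obtain ⟨v, hv, hcase⟩ := hex
    obtain ⟨hb3, hb4⟩ := mem34 b h01 h03 h12 h02 h04 h13 h14 h23 h24 h34 I hv hcase
    by_cases hc0 : b.coord 0 v = 0
    · have hc1 : b.coord 1 v ≠ 0 := hcase.resolve_left (not_not_intro hc0)
      refine ⟨Sum.inr (Sum.inl ((b.coord 1 v)⁻¹ * b.coord 2 v)), ?_⟩
      have hc0' : b.repr v 0 = 0 := hc0
      have hc1' : b.repr v 1 ≠ 0 := hc1
      have key : b 1 + ((b.coord 1 v)⁻¹ * b.coord 2 v) • b 2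
          = (b.coord 1 v)⁻¹ • (v - b.coord 3 v • b 3 - b.coord 4 v • b 4) := by
        apply ext_coords b
        intro i
        fin_cases i <;>
          simp [ccR, hc0', Basis.coord_apply, inv_mul_cancel₀ hc1']
      have gen_mem : b 1 + ((b.coord 1 v)⁻¹ * b.coord 2 v) • b 2 ∈ I := by
        rw [key]
        exact SMulMemClass.smul_mem _
          (sub_mem (sub_mem hv (SMulMemClass.smul_mem _ hb3)) (SMulMemClass.smul_mem _ hb4))
      have hle : W3 b (Sum.inr (Sum.inl ((b.coord 1 v)⁻¹ * b.coord 2 v))) ≤ I.toSubmodule := by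
        rw [show W3 b (Sum.inr (Sum.inl ((b.coord 1 v)⁻¹ * b.coord 2 v))) =
          span (ZMod p) (range ![b 1 + ((b.coord 1 v)⁻¹ * b.coord 2 v) • b 2, b 3, b 4]) from rfl,
          span_le]
        rintro _ ⟨j, rfl⟩
        fin_cases j
        · exact gen_mem
        · exact hb3
        · exact hb4
      exact eq_of_span_le b I _ hle (frW3 b _) hI
    · refine ⟨Sum.inl ((b.coord 0 v)⁻¹ * b.coord 1 v, (b.coord 0 v)⁻¹ * b.coord 2 v), ?_⟩
      have key : b 0 + ((b.coord 0 v)⁻¹ * b.coord 1 v) • b 1 + ((b.coord 0 v)⁻¹ * b.coord 2 v) • b 2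
          = (b.coord 0 v)⁻¹ • (v - b.coord 3 v • b 3 - b.coord 4 v • b 4) := by
        apply ext_coords b
        intro i
        fin_cases i <;>
          simp [ccR, Basis.coord_apply, inv_mul_cancel₀ (show b.repr v 0 ≠ 0 from hc0)]
      have gen_mem : b 0 + ((b.coord 0 v)⁻¹ * b.coord 1 v) • b 1
          + ((b.coord 0 v)⁻¹ * b.coord 2 v) • b 2 ∈ I := by
        rw [key]
        exact SMulMemClass.smul_mem _
          (sub_mem (sub_mem hv (SMulMemClass.smul_mem _ hb3)) (SMulMemClass.smul_mem _ hb4))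
      have hle : W3 b (Sum.inl ((b.coord 0 v)⁻¹ * b.coord 1 v, (b.coord 0 v)⁻¹ * b.coord 2 v))
          ≤ I.toSubmodule := by
        rw [show W3 b (Sum.inl ((b.coord 0 v)⁻¹ * b.coord 1 v, (b.coord 0 v)⁻¹ * b.coord 2 v)) =
          span (ZMod p) (range ![b 0 + ((b.coord 0 v)⁻¹ * b.coord 1 v) • b 1
            + ((b.coord 0 v)⁻¹ * b.coord 2 v) • b 2, b 3, b 4]) from rfl, span_le]
        rintro _ ⟨j, rfl⟩
        fin_cases j
        · exact gen_mem
        · exact hb3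
        · exact hb4
      exact eq_of_span_le b I _ hle (frW3 b _) hI
  · push_neg at hex
    refine ⟨Sum.inr (Sum.inr ()), ?_⟩
    have hle : I.toSubmodule ≤ W3 b (Sum.inr (Sum.inr ())) := by
      intro v hv
      have hv' : v ∈ I := hv
      rw [show W3 b (Sum.inr (Sum.inr ())) = span (ZMod p) (range ![b 2, b 3, b 4]) from rfl]
      rw [← sum_repr' b v, Fin.sum_univ_five, (hex v hv').1, (hex v hv').2]
      simp only [zero_smul, zero_add]
      exact add_mem (add_mem (Submodule.smul_mem _ _ (subset_span ⟨0, rfl⟩))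
        (Submodule.smul_mem _ _ (subset_span ⟨1, rfl⟩)))
        (Submodule.smul_mem _ _ (subset_span ⟨2, rfl⟩))
    exact Submodule.eq_of_le_of_finrank_le hle (by rw [frW3]; exact hI.ge)


set_option maxHeartbeats 2000000 in
lemma classify4 (I : LieIdeal (ZMod p) L) (hI : finrank (ZMod p) I = 4) :
    ∃ x, I.toSubmodule = W4 b x := by
  have fd := Module.Finite.of_basis b
  have hex : ∃ v ∈ I, b.coord 0 v ≠ 0 ∨ b.coord 1 v ≠ 0 := by
    by_contra hno
    push_neg at hno
    have hle : I.toSubmodule ≤ span (ZMod p) (range ![b 2, b 3, b 4]) := by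
      intro v hv
      have hv' : v ∈ I := hv
      rw [← sum_repr' b v, Fin.sum_univ_five, (hno v hv').1, (hno v hv').2]
      simp only [zero_smul, zero_add]
      exact add_mem (add_mem (Submodule.smul_mem _ _ (subset_span ⟨0, rfl⟩))
        (Submodule.smul_mem _ _ (subset_span ⟨1, rfl⟩)))
        (Submodule.smul_mem _ _ (subset_span ⟨2, rfl⟩))
    have h3 := Submodule.finrank_mono (s := I.toSubmodule)
      (t := span (ZMod p) (range ![b 2, b 3, b 4])) hle
    rw [show span (ZMod p) (range ![b 2, b 3, b 4]) = W3 b (Sum.inr (Sum.inr ())) from rfl,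
      frW3] at h3
    have hI' : finrank (ZMod p) I.toSubmodule = 4 := hI
    omega
  obtain ⟨v, hv, hcase⟩ := hex
  obtain ⟨hb3, hb4⟩ := mem34 b h01 h03 h12 h02 h04 h13 h14 h23 h24 h34 I hv hcase
  by_cases hb2 : b 2 ∈ I
  · by_cases hc0 : b.coord 0 v = 0
    · have hc1 : b.coord 1 v ≠ 0 := hcase.resolve_left (not_not_intro hc0)
      refine ⟨Sum.inr (Sum.inr ()), ?_⟩
      have hc0' : b.repr v 0 = 0 := hc0
      have hc1' : b.repr v 1 ≠ 0 := hc1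
      have key : b 1 = (b.coord 1 v)⁻¹
          • (v - b.coord 2 v • b 2 - b.coord 3 v • b 3 - b.coord 4 v • b 4) := by
        apply ext_coords b
        intro i
        fin_cases i <;> simp [ccR, hc0', Basis.coord_apply, inv_mul_cancel₀ hc1']
      have gen_mem : b 1 ∈ I := by
        rw [key]
        exact SMulMemClass.smul_mem _ (sub_mem (sub_mem (sub_mem hv
          (SMulMemClass.smul_mem _ hb2)) (SMulMemClass.smul_mem _ hb3))
          (SMulMemClass.smul_mem _ hb4))
      have hle : W4 b (Sum.inr (Sum.inr ())) ≤ I.toSubmodule := by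
        rw [show W4 b (Sum.inr (Sum.inr ())) = span (ZMod p) (range ![b 1, b 2, b 3, b 4])
          from rfl, span_le]
        rintro _ ⟨j, rfl⟩
        fin_cases j
        · exact gen_mem
        · exact hb2
        · exact hb3
        · exact hb4
      exact eq_of_span_le b I _ hle (frW4 b _) hI
    · refine ⟨Sum.inr (Sum.inl ((b.coord 0 v)⁻¹ * b.coord 1 v)), ?_⟩
      have hc0' : b.repr v 0 ≠ 0 := hc0
      have key : b 0 + ((b.coord 0 v)⁻¹ * b.coord 1 v) • b 1 = (b.coord 0 v)⁻¹
          • (v - b.coord 2 v • b 2 - b.coord 3 v • b 3 - b.coord 4 v • b 4) := by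
        apply ext_coords b
        intro i
        fin_cases i <;> simp [ccR, Basis.coord_apply, inv_mul_cancel₀ hc0']
      have gen_mem : b 0 + ((b.coord 0 v)⁻¹ * b.coord 1 v) • b 1 ∈ I := by
        rw [key]
        exact SMulMemClass.smul_mem _ (sub_mem (sub_mem (sub_mem hv
          (SMulMemClass.smul_mem _ hb2)) (SMulMemClass.smul_mem _ hb3))
          (SMulMemClass.smul_mem _ hb4))
      have hle : W4 b (Sum.inr (Sum.inl ((b.coord 0 v)⁻¹ * b.coord 1 v))) ≤ I.toSubmodule := by
        rw [show W4 b (Sum.inr (Sum.inl ((b.coord 0 v)⁻¹ * b.coord 1 v))) =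
          span (ZMod p) (range ![b 0 + ((b.coord 0 v)⁻¹ * b.coord 1 v) • b 1, b 2, b 3, b 4])
          from rfl, span_le]
        rintro _ ⟨j, rfl⟩
        fin_cases j
        · exact gen_mem
        · exact hb2
        · exact hb3
        · exact hb4
      exact eq_of_span_le b I _ hle (frW4 b _) hI
  · have hu : ∃ u ∈ I, b.coord 0 u ≠ 0 := by
      by_contra hno
      push_neg at hno
      have hle : I.toSubmodule ≤ span (ZMod p) (range ![b 1, b 2, b 3, b 4]) := by
        intro y hy
        have hy' : y ∈ I := hy
        rw [← sum_repr' b y, Fin.sum_univ_five, hno y hy']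
        simp only [zero_smul, zero_add]
        exact add_mem (add_mem (add_mem (Submodule.smul_mem _ _ (subset_span ⟨0, rfl⟩))
          (Submodule.smul_mem _ _ (subset_span ⟨1, rfl⟩)))
          (Submodule.smul_mem _ _ (subset_span ⟨2, rfl⟩)))
          (Submodule.smul_mem _ _ (subset_span ⟨3, rfl⟩))
      have heq : I.toSubmodule = span (ZMod p) (range ![b 1, b 2, b 3, b 4]) :=
        Submodule.eq_of_le_of_finrank_le hle (by
          rw [show span (ZMod p) (range ![b 1, b 2, b 3, b 4]) = W4 b (Sum.inr (Sum.inr ()))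
            from rfl, frW4]
          exact hI.ge)
      refine hb2 ?_
      have : b 2 ∈ I.toSubmodule := by
        rw [heq]; exact subset_span ⟨1, rfl⟩
      exact this
    obtain ⟨u, hu', hcu⟩ := hu
    have hcu' : b.repr u 0 ≠ 0 := hcu
    have hw : ∃ w ∈ I, b.coord 0 w = 0 ∧ b.coord 1 w ≠ 0 := by
      by_contra hno
      push_neg at hno
      have hle : I.toSubmodule ≤ span (ZMod p) (range ![u, b 2, b 3, b 4]) := by
        intro y hy
        have hy' : y ∈ I := hy
        have hsub : y - ((b.coord 0 u)⁻¹ * b.coord 0 y) • u ∈ I :=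
          sub_mem hy' (SMulMemClass.smul_mem _ hu')
        have hz0 : b.coord 0 (y - ((b.coord 0 u)⁻¹ * b.coord 0 y) • u) = 0 := by
          rw [map_sub, map_smul, smul_eq_mul]
          field_simp
          simp
        have hz1 : b.coord 1 (y - ((b.coord 0 u)⁻¹ * b.coord 0 y) • u) = 0 :=
          hno _ hsub hz0
        have m1 : y - ((b.coord 0 u)⁻¹ * b.coord 0 y) • u
            ∈ span (ZMod p) (range ![u, b 2, b 3, b 4]) := by
          rw [← sum_repr' b (y - ((b.coord 0 u)⁻¹ * b.coord 0 y) • u), Fin.sum_univ_five,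
            hz0, hz1]
          simp only [zero_smul, zero_add]
          exact add_mem (add_mem (Submodule.smul_mem _ _ (subset_span ⟨1, rfl⟩))
            (Submodule.smul_mem _ _ (subset_span ⟨2, rfl⟩)))
            (Submodule.smul_mem _ _ (subset_span ⟨3, rfl⟩))
        have hyd : y = (y - ((b.coord 0 u)⁻¹ * b.coord 0 y) • u)
            + ((b.coord 0 u)⁻¹ * b.coord 0 y) • u := by abel
        rw [hyd]
        exact add_mem m1 (Submodule.smul_mem _ _ (subset_span ⟨0, rfl⟩))
      have li : LinearIndependent (ZMod p) ![u, b 2, b 3, b 4] := by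
        rw [Fintype.linearIndependent_iff]
        intro g hg
        have e0 := congrArg (b.coord 0) hg
        have e2 := congrArg (b.coord 2) hg
        have e3 := congrArg (b.coord 3) hg
        have e4 := congrArg (b.coord 4) hg
        simp [Fin.sum_univ_succ, ccB, show (Fin.succ 2 : Fin 4) = 3 from rfl] at e0 e2 e3 e4
        have hg0 : g 0 = 0 := by
          rcases e0 with h' | h'
          · exact h'
          · exact absurd h' hcu'
        rw [hg0] at e2 e3 e4
        simp at e2 e3 e4
        intro i
        fin_cases i
        · exact hg0
        · exact e2
        · exact e3
        · exact e4
      have heq : I.toSubmodule = span (ZMod p) (range ![u, b 2, b 3, b 4]) :=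
        Submodule.eq_of_le_of_finrank_le hle (by
          rw [finrank_span_eq_card li]
          simp only [Fintype.card_fin]; exact hI.ge)
      refine hb2 ?_
      have : b 2 ∈ I.toSubmodule := by
        rw [heq]; exact subset_span ⟨1, rfl⟩
      exact this
    obtain ⟨w, hw', hw0, hw1⟩ := hw
    have hw0' : b.repr w 0 = 0 := hw0
    have hw1' : b.repr w 1 ≠ 0 := hw1
    have keyw : b 1 + ((b.coord 1 w)⁻¹ * b.coord 2 w) • b 2
        = (b.coord 1 w)⁻¹ • (w - b.coord 3 w • b 3 - b.coord 4 w • b 4) := by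
      apply ext_coords b
      intro i
      fin_cases i <;> simp [ccR, hw0', Basis.coord_apply, inv_mul_cancel₀ hw1']
    have wn_mem : b 1 + ((b.coord 1 w)⁻¹ * b.coord 2 w) • b 2 ∈ I := by
      rw [keyw]
      exact SMulMemClass.smul_mem _ (sub_mem (sub_mem hw' (SMulMemClass.smul_mem _ hb3))
        (SMulMemClass.smul_mem _ hb4))
    have keyu : b 0 + ((b.coord 0 u)⁻¹ * b.coord 2 u
          - ((b.coord 0 u)⁻¹ * b.coord 1 u) * ((b.coord 1 w)⁻¹ * b.coord 2 w)) • b 2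
        = (b.coord 0 u)⁻¹ • (u - b.coord 3 u • b 3 - b.coord 4 u • b 4)
          - ((b.coord 0 u)⁻¹ * b.coord 1 u) • (b 1 + ((b.coord 1 w)⁻¹ * b.coord 2 w) • b 2) := by
      apply ext_coords b
      intro i
      fin_cases i <;>
        simp [ccR, Basis.coord_apply, inv_mul_cancel₀ hcu', mul_sub, sub_mul, mul_assoc]
    have un_mem : b 0 + ((b.coord 0 u)⁻¹ * b.coord 2 u
        - ((b.coord 0 u)⁻¹ * b.coord 1 u) * ((b.coord 1 w)⁻¹ * b.coord 2 w)) • b 2 ∈ I := by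
      rw [keyu]
      exact sub_mem (SMulMemClass.smul_mem _ (sub_mem (sub_mem hu'
        (SMulMemClass.smul_mem _ hb3)) (SMulMemClass.smul_mem _ hb4)))
        (SMulMemClass.smul_mem _ wn_mem)
    refine ⟨Sum.inl ((b.coord 0 u)⁻¹ * b.coord 2 u
      - ((b.coord 0 u)⁻¹ * b.coord 1 u) * ((b.coord 1 w)⁻¹ * b.coord 2 w),
      (b.coord 1 w)⁻¹ * b.coord 2 w), ?_⟩
    have hle : W4 b (Sum.inl ((b.coord 0 u)⁻¹ * b.coord 2 u
        - ((b.coord 0 u)⁻¹ * b.coord 1 u) * ((b.coord 1 w)⁻¹ * b.coord 2 w),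
        (b.coord 1 w)⁻¹ * b.coord 2 w)) ≤ I.toSubmodule := by
      rw [show W4 b (Sum.inl ((b.coord 0 u)⁻¹ * b.coord 2 u
          - ((b.coord 0 u)⁻¹ * b.coord 1 u) * ((b.coord 1 w)⁻¹ * b.coord 2 w),
          (b.coord 1 w)⁻¹ * b.coord 2 w)) =
        span (ZMod p) (range ![b 0 + ((b.coord 0 u)⁻¹ * b.coord 2 u
          - ((b.coord 0 u)⁻¹ * b.coord 1 u) * ((b.coord 1 w)⁻¹ * b.coord 2 w)) • b 2,
          b 1 + ((b.coord 1 w)⁻¹ * b.coord 2 w) • b 2, b 3, b 4]) from rfl, span_le]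
      rintro _ ⟨j, rfl⟩
      fin_cases j
      · exact un_mem
      · exact wn_mem
      · exact hb3
      · exact hb4
    exact eq_of_span_le b I _ hle (frW4 b _) hI


omit h01 h03 h12 h02 h04 h13 h14 h23 h24 h34

lemma injW2 : Function.Injective (W2 b) := by
  intro x y hxy
  match x, y with
  | none, none => rfl
  | some a, some a' =>
    have hm : b 2 + a • b 3 ∈ W2 b (some a') := hxy ▸ subset_span ⟨1, rfl⟩
    rw [show W2 b (some a') = span (ZMod p) (range ![b 4, b 2 + a' • b 3]) from rfl,
      mem_span_range_iff_exists_fun] at hm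
    obtain ⟨t, ht⟩ := hm
    have e2 := congrArg (b.coord 2) ht
    have e3 := congrArg (b.coord 3) ht
    simp [Fin.sum_univ_succ, ccR, Basis.coord_apply] at e2 e3
    rw [e2, one_mul] at e3
    rw [e3]
  | none, some a' =>
    exfalso
    have hm : b 3 ∈ W2 b (some a') := hxy ▸ subset_span ⟨1, rfl⟩
    rw [show W2 b (some a') = span (ZMod p) (range ![b 4, b 2 + a' • b 3]) from rfl,
      mem_span_range_iff_exists_fun] at hm
    obtain ⟨t, ht⟩ := hm
    have e2 := congrArg (b.coord 2) ht
    have e3 := congrArg (b.coord 3) ht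
    simp [Fin.sum_univ_succ, ccR, Basis.coord_apply] at e2 e3
    rw [e2, zero_mul] at e3
    exact zero_ne_one e3
  | some a, none =>
    exfalso
    have hm : b 2 + a • b 3 ∈ W2 b none := hxy ▸ subset_span ⟨1, rfl⟩
    rw [show W2 b none = span (ZMod p) (range ![b 4, b 3]) from rfl,
      mem_span_range_iff_exists_fun] at hm
    obtain ⟨t, ht⟩ := hm
    have e2 := congrArg (b.coord 2) ht
    simp [Fin.sum_univ_succ, ccR, Basis.coord_apply] at e2


lemma injW3 : Function.Injective (W3 b) := by
  intro x y hxy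
  match x, y with
  | .inl (a, c), .inl (a', c') =>
    have hm : b 0 + a • b 1 + c • b 2 ∈ W3 b (.inl (a', c')) := hxy ▸ subset_span ⟨0, rfl⟩
    rw [show W3 b (.inl (a', c')) =
      span (ZMod p) (range ![b 0 + a' • b 1 + c' • b 2, b 3, b 4]) from rfl,
      mem_span_range_iff_exists_fun] at hm
    obtain ⟨t, ht⟩ := hm
    have e0 := congrArg (b.coord 0) ht
    have e1 := congrArg (b.coord 1) ht
    have e2 := congrArg (b.coord 2) ht
    simp [Fin.sum_univ_succ, ccR, Basis.coord_apply] at e0 e1 e2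
    rw [e0, one_mul] at e1 e2
    rw [e1, e2]
  | .inl (a, c), .inr (.inl c') =>
    exfalso
    have hm : b 0 + a • b 1 + c • b 2 ∈ W3 b (.inr (.inl c')) := hxy ▸ subset_span ⟨0, rfl⟩
    rw [show W3 b (.inr (.inl c')) =
      span (ZMod p) (range ![b 1 + c' • b 2, b 3, b 4]) from rfl,
      mem_span_range_iff_exists_fun] at hm
    obtain ⟨t, ht⟩ := hm
    have e0 := congrArg (b.coord 0) ht
    simp [Fin.sum_univ_succ, ccR, Basis.coord_apply] at e0
  | .inl (a, c), .inr (.inr _) =>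
    exfalso
    have hm : b 0 + a • b 1 + c • b 2 ∈ W3 b (.inr (.inr ())) := hxy ▸ subset_span ⟨0, rfl⟩
    rw [show W3 b (.inr (.inr ())) =
      span (ZMod p) (range ![b 2, b 3, b 4]) from rfl,
      mem_span_range_iff_exists_fun] at hm
    obtain ⟨t, ht⟩ := hm
    have e0 := congrArg (b.coord 0) ht
    simp [Fin.sum_univ_succ, ccR, Basis.coord_apply] at e0
  | .inr (.inl c), .inl (a', c') =>
    exfalso
    have hm : b 1 + c • b 2 ∈ W3 b (.inl (a', c')) := hxy ▸ subset_span ⟨0, rfl⟩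
    rw [show W3 b (.inl (a', c')) =
      span (ZMod p) (range ![b 0 + a' • b 1 + c' • b 2, b 3, b 4]) from rfl,
      mem_span_range_iff_exists_fun] at hm
    obtain ⟨t, ht⟩ := hm
    have e0 := congrArg (b.coord 0) ht
    have e1 := congrArg (b.coord 1) ht
    simp [Fin.sum_univ_succ, ccR, Basis.coord_apply] at e0 e1
    rw [e0, zero_mul] at e1
    exact zero_ne_one e1
  | .inr (.inl c), .inr (.inl c') =>
    have hm : b 1 + c • b 2 ∈ W3 b (.inr (.inl c')) := hxy ▸ subset_span ⟨0, rfl⟩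
    rw [show W3 b (.inr (.inl c')) =
      span (ZMod p) (range ![b 1 + c' • b 2, b 3, b 4]) from rfl,
      mem_span_range_iff_exists_fun] at hm
    obtain ⟨t, ht⟩ := hm
    have e1 := congrArg (b.coord 1) ht
    have e2 := congrArg (b.coord 2) ht
    simp [Fin.sum_univ_succ, ccR, Basis.coord_apply] at e1 e2
    rw [e1, one_mul] at e2
    rw [e2]
  | .inr (.inl c), .inr (.inr _) =>
    exfalso
    have hm : b 1 + c • b 2 ∈ W3 b (.inr (.inr ())) := hxy ▸ subset_span ⟨0, rfl⟩
    rw [show W3 b (.inr (.inr ())) =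
      span (ZMod p) (range ![b 2, b 3, b 4]) from rfl,
      mem_span_range_iff_exists_fun] at hm
    obtain ⟨t, ht⟩ := hm
    have e1 := congrArg (b.coord 1) ht
    simp [Fin.sum_univ_succ, ccR, Basis.coord_apply] at e1
  | .inr (.inr _), .inl (a', c') =>
    exfalso
    have hm : b 2 ∈ W3 b (.inl (a', c')) := hxy ▸ subset_span ⟨0, rfl⟩
    rw [show W3 b (.inl (a', c')) =
      span (ZMod p) (range ![b 0 + a' • b 1 + c' • b 2, b 3, b 4]) from rfl,
      mem_span_range_iff_exists_fun] at hm
    obtain ⟨t, ht⟩ := hm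
    have e0 := congrArg (b.coord 0) ht
    have e2 := congrArg (b.coord 2) ht
    simp [Fin.sum_univ_succ, ccR, Basis.coord_apply] at e0 e2
    rw [e0, zero_mul] at e2
    exact zero_ne_one e2
  | .inr (.inr _), .inr (.inl c') =>
    exfalso
    have hm : b 2 ∈ W3 b (.inr (.inl c')) := hxy ▸ subset_span ⟨0, rfl⟩
    rw [show W3 b (.inr (.inl c')) =
      span (ZMod p) (range ![b 1 + c' • b 2, b 3, b 4]) from rfl,
      mem_span_range_iff_exists_fun] at hm
    obtain ⟨t, ht⟩ := hm
    have e1 := congrArg (b.coord 1) ht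
    have e2 := congrArg (b.coord 2) ht
    simp [Fin.sum_univ_succ, ccR, Basis.coord_apply] at e1 e2
    rw [e1, zero_mul] at e2
    exact zero_ne_one e2
  | .inr (.inr _), .inr (.inr _) => rfl

lemma injW4 : Function.Injective (W4 b) := by
  intro x y hxy
  match x, y with
  | .inl (a, c), .inl (a', c') =>
    have hm1 : b 0 + a • b 2 ∈ W4 b (.inl (a', c')) := hxy ▸ subset_span ⟨0, rfl⟩
    have hm2 : b 1 + c • b 2 ∈ W4 b (.inl (a', c')) := hxy ▸ subset_span ⟨1, rfl⟩
    rw [show W4 b (.inl (a', c')) =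
      span (ZMod p) (range ![b 0 + a' • b 2, b 1 + c' • b 2, b 3, b 4]) from rfl,
      mem_span_range_iff_exists_fun] at hm1 hm2
    obtain ⟨t, ht⟩ := hm1
    obtain ⟨s, hs⟩ := hm2
    have e0 := congrArg (b.coord 0) ht
    have e1 := congrArg (b.coord 1) ht
    have e2 := congrArg (b.coord 2) ht
    have f0 := congrArg (b.coord 0) hs
    have f1 := congrArg (b.coord 1) hs
    have f2 := congrArg (b.coord 2) hs
    simp [Fin.sum_univ_succ, ccR, Basis.coord_apply] at e0 e1 e2 f0 f1 f2
    rw [e0, e1, one_mul, zero_mul, add_zero] at e2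
    rw [f0, f1, one_mul, zero_mul, zero_add] at f2
    rw [e2, f2]
  | .inl (a, c), .inr (.inl a') =>
    exfalso
    have hm : b 1 + c • b 2 ∈ W4 b (.inr (.inl a')) := hxy ▸ subset_span ⟨1, rfl⟩
    rw [show W4 b (.inr (.inl a')) =
      span (ZMod p) (range ![b 0 + a' • b 1, b 2, b 3, b 4]) from rfl,
      mem_span_range_iff_exists_fun] at hm
    obtain ⟨t, ht⟩ := hm
    have e0 := congrArg (b.coord 0) ht
    have e1 := congrArg (b.coord 1) ht
    simp [Fin.sum_univ_succ, ccR, Basis.coord_apply] at e0 e1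
    rw [e0, zero_mul] at e1
    exact zero_ne_one e1
  | .inl (a, c), .inr (.inr _) =>
    exfalso
    have hm : b 0 + a • b 2 ∈ W4 b (.inr (.inr ())) := hxy ▸ subset_span ⟨0, rfl⟩
    rw [show W4 b (.inr (.inr ())) =
      span (ZMod p) (range ![b 1, b 2, b 3, b 4]) from rfl,
      mem_span_range_iff_exists_fun] at hm
    obtain ⟨t, ht⟩ := hm
    have e0 := congrArg (b.coord 0) ht
    simp [Fin.sum_univ_succ, ccR, Basis.coord_apply] at e0
  | .inr (.inl a), .inl (a', c') =>
    exfalso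
    have hm : b 2 ∈ W4 b (.inl (a', c')) := hxy ▸ subset_span ⟨1, rfl⟩
    rw [show W4 b (.inl (a', c')) =
      span (ZMod p) (range ![b 0 + a' • b 2, b 1 + c' • b 2, b 3, b 4]) from rfl,
      mem_span_range_iff_exists_fun] at hm
    obtain ⟨t, ht⟩ := hm
    have e0 := congrArg (b.coord 0) ht
    have e1 := congrArg (b.coord 1) ht
    have e2 := congrArg (b.coord 2) ht
    simp [Fin.sum_univ_succ, ccR, Basis.coord_apply] at e0 e1 e2
    rw [e0, e1, zero_mul, zero_mul, add_zero] at e2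
    exact zero_ne_one e2
  | .inr (.inl a), .inr (.inl a') =>
    have hm : b 0 + a • b 1 ∈ W4 b (.inr (.inl a')) := hxy ▸ subset_span ⟨0, rfl⟩
    rw [show W4 b (.inr (.inl a')) =
      span (ZMod p) (range ![b 0 + a' • b 1, b 2, b 3, b 4]) from rfl,
      mem_span_range_iff_exists_fun] at hm
    obtain ⟨t, ht⟩ := hm
    have e0 := congrArg (b.coord 0) ht
    have e1 := congrArg (b.coord 1) ht
    simp [Fin.sum_univ_succ, ccR, Basis.coord_apply] at e0 e1
    rw [e0, one_mul] at e1
    rw [e1]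
  | .inr (.inl a), .inr (.inr _) =>
    exfalso
    have hm : b 0 + a • b 1 ∈ W4 b (.inr (.inr ())) := hxy ▸ subset_span ⟨0, rfl⟩
    rw [show W4 b (.inr (.inr ())) =
      span (ZMod p) (range ![b 1, b 2, b 3, b 4]) from rfl,
      mem_span_range_iff_exists_fun] at hm
    obtain ⟨t, ht⟩ := hm
    have e0 := congrArg (b.coord 0) ht
    simp [Fin.sum_univ_succ, ccR, Basis.coord_apply] at e0
  | .inr (.inr _), .inl (a', c') =>
    exfalso
    have hm : b 2 ∈ W4 b (.inl (a', c')) := hxy ▸ subset_span ⟨1, rfl⟩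
    rw [show W4 b (.inl (a', c')) =
      span (ZMod p) (range ![b 0 + a' • b 2, b 1 + c' • b 2, b 3, b 4]) from rfl,
      mem_span_range_iff_exists_fun] at hm
    obtain ⟨t, ht⟩ := hm
    have e0 := congrArg (b.coord 0) ht
    have e1 := congrArg (b.coord 1) ht
    have e2 := congrArg (b.coord 2) ht
    simp [Fin.sum_univ_succ, ccR, Basis.coord_apply] at e0 e1 e2
    rw [e0, e1, zero_mul, zero_mul, add_zero] at e2
    exact zero_ne_one e2
  | .inr (.inr _), .inr (.inl a') =>
    exfalso
    have hm : b 1 ∈ W4 b (.inr (.inr ())) := subset_span ⟨0, rfl⟩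
    rw [hxy] at hm
    rw [show W4 b (.inr (.inl a')) =
      span (ZMod p) (range ![b 0 + a' • b 1, b 2, b 3, b 4]) from rfl,
      mem_span_range_iff_exists_fun] at hm
    obtain ⟨t, ht⟩ := hm
    have e0 := congrArg (b.coord 0) ht
    have e1 := congrArg (b.coord 1) ht
    simp [Fin.sum_univ_succ, ccR, Basis.coord_apply] at e0 e1
    rw [e0, zero_mul] at e1
    exact zero_ne_one e1
  | .inr (.inr _), .inr (.inr _) => rfl

end G53

/-- For the 5-dimensional Lie algebra `g_{5,3}(F_p)` with brackets `[x_1,x_2] = x_4`,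
`[x_1,x_4] = x_5`, `[x_2,x_3] = x_5` (other basis brackets zero), the number of Lie
ideals of codimension `k` is `1, 1+p+p^2, 1+p+p^2, 1+p, 1, 1` for `k = 0,1,2,3,4,5`;
i.e. the ideal zeta polynomial is `ζ_{F_p^3}(s) + p t^3 + t^4 + t^5`. -/
theorem g53_ideal_count (p : ℕ) [Fact p.Prime]
    (L : Type*) [LieRing L] [LieAlgebra (ZMod p) L]
    (b : Basis (Fin 5) (ZMod p) L)
    (h01 : ⁅b 0, b 1⁆ = b 3) (h03 : ⁅b 0, b 3⁆ = b 4) (h12 : ⁅b 1, b 2⁆ = b 4)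
    (h02 : ⁅b 0, b 2⁆ = 0) (h04 : ⁅b 0, b 4⁆ = 0) (h13 : ⁅b 1, b 3⁆ = 0)
    (h14 : ⁅b 1, b 4⁆ = 0) (h23 : ⁅b 2, b 3⁆ = 0) (h24 : ⁅b 2, b 4⁆ = 0)
    (h34 : ⁅b 3, b 4⁆ = 0) :
    Nat.card {I : LieIdeal (ZMod p) L | finrank (ZMod p) I = 5} = 1 ∧
    Nat.card {I : LieIdeal (ZMod p) L | finrank (ZMod p) I = 4} = 1 + p + p ^ 2 ∧
    Nat.card {I : LieIdeal (ZMod p) L | finrank (ZMod p) I = 3} = 1 + p + p ^ 2 ∧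
    Nat.card {I : LieIdeal (ZMod p) L | finrank (ZMod p) I = 2} = 1 + p ∧
    Nat.card {I : LieIdeal (ZMod p) L | finrank (ZMod p) I = 1} = 1 ∧
    Nat.card {I : LieIdeal (ZMod p) L | finrank (ZMod p) I = 0} = 1 := by
  have fd := Module.Finite.of_basis b
  have hL : finrank (ZMod p) L = 5 := by rw [finrank_eq_card_basis b, Fintype.card_fin]
  refine ⟨?_, ?_, ?_, ?_, ?_, ?_⟩
  · have hset : {I : LieIdeal (ZMod p) L | finrank (ZMod p) I = 5} = {⊤} := by
      ext I
      simp only [Set.mem_setOf_eq, Set.mem_singleton_iff]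
      constructor
      · intro h
        rw [← LieSubmodule.toSubmodule_eq_top]
        exact Submodule.eq_top_of_finrank_eq (by rw [hL]; exact h)
      · rintro rfl
        rw [show finrank (ZMod p) (⊤ : LieIdeal (ZMod p) L) = finrank (ZMod p) L from
          finrank_top _ _, hL]
    rw [hset]; exact Nat.card_unique
  · have e : ((ZMod p × ZMod p) ⊕ (ZMod p) ⊕ Unit) ≃
        {I : LieIdeal (ZMod p) L | finrank (ZMod p) I = 4} := by
      refine Equiv.ofBijective (fun x => ⟨J4 b h01 h03 h12 h02 h04 h13 h14 h23 h24 h34 x, frW4 b x⟩) ⟨?_, ?_⟩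
      · intro x y hxy
        exact injW4 b (congrArg (fun I => LieSubmodule.toSubmodule I.1) hxy)
      · rintro ⟨I, hI⟩
        obtain ⟨x, hx⟩ := classify4 b h01 h03 h12 h02 h04 h13 h14 h23 h24 h34 I hI
        exact ⟨x, Subtype.ext ((LieSubmodule.toSubmodule_inj _ _).mp hx.symm)⟩
    rw [← Nat.card_congr e, Nat.card_sum, Nat.card_sum, Nat.card_prod, Nat.card_zmod,
      Nat.card_unique]
    ring
  · have e : ((ZMod p × ZMod p) ⊕ (ZMod p) ⊕ Unit) ≃
        {I : LieIdeal (ZMod p) L | finrank (ZMod p) I = 3} := by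
      refine Equiv.ofBijective (fun x => ⟨J3 b h01 h03 h12 h02 h04 h13 h14 h23 h24 h34 x, frW3 b x⟩) ⟨?_, ?_⟩
      · intro x y hxy
        exact injW3 b (congrArg (fun I => LieSubmodule.toSubmodule I.1) hxy)
      · rintro ⟨I, hI⟩
        obtain ⟨x, hx⟩ := classify3 b h01 h03 h12 h02 h04 h13 h14 h23 h24 h34 I hI
        exact ⟨x, Subtype.ext ((LieSubmodule.toSubmodule_inj _ _).mp hx.symm)⟩
    rw [← Nat.card_congr e, Nat.card_sum, Nat.card_sum, Nat.card_prod, Nat.card_zmod,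
      Nat.card_unique]
    ring
  · have e : Option (ZMod p) ≃ {I : LieIdeal (ZMod p) L | finrank (ZMod p) I = 2} := by
      refine Equiv.ofBijective (fun x => ⟨J2 b h01 h03 h12 h02 h04 h13 h14 h23 h24 h34 x, frW2 b x⟩) ⟨?_, ?_⟩
      · intro x y hxy
        exact injW2 b (congrArg (fun I => LieSubmodule.toSubmodule I.1) hxy)
      · rintro ⟨I, hI⟩
        obtain ⟨x, hx⟩ := classify2 b h01 h03 h12 h02 h04 h13 h14 h23 h24 h34 I hI
        exact ⟨x, Subtype.ext ((LieSubmodule.toSubmodule_inj _ _).mp hx.symm)⟩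
    rw [← Nat.card_congr e, Finite.card_option, Nat.card_zmod]
    omega
  · have hset : {I : LieIdeal (ZMod p) L | finrank (ZMod p) I = 1} = {J1 b h01 h03 h12 h02 h04 h13 h14 h23 h24 h34} := by
      ext I
      simp only [Set.mem_setOf_eq, Set.mem_singleton_iff]
      constructor
      · intro h
        refine (LieSubmodule.toSubmodule_inj _ _).mp ?_
        rw [classify1 b h01 h03 h12 h02 h04 h13 h14 h23 h24 h34 I h]
        rfl
      · rintro rfl
        exact frW1 b
    rw [hset]; exact Nat.card_unique
  · have hset : {I : LieIdeal (ZMod p) L | finrank (ZMod p) I = 0} = {⊥} := by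
      ext I
      simp only [Set.mem_setOf_eq, Set.mem_singleton_iff]
      constructor
      · intro h
        rw [← LieSubmodule.toSubmodule_eq_bot]
        exact Submodule.finrank_eq_zero.mp h
      · rintro rfl
        exact finrank_bot _ _
    rw [hset]; exact Nat.card_unique
end
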